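/- arXiv:2111.10472 — 10 statements merged into one kernel-verified Lean document; each statement's English description precedes it below -/
import Mathlib

section
/- Let μ be a probability measure on ℝ supported on [0,∞), and let n ≥ k ≥ 1 be integers with s = ⌈n/k⌉. Assume the maximum of n i.i.d. draws from μ is integrable. Then k·E[v^{(1,s)}] ≥ (1 − 1/e)·∑_{j=1}^k E[v^{(j,n)}]. -/
open MeasureTheory Filter Set
open scoped ENNReal

/-- The `j`-th largest value (1-indexed) among the `t` coordinates of `v`. -/
noncomputable def orderStat (t j : ℕ) (v : Fin t → ℝ) : ℝ :=
  ((List.ofFn v).insertionSort (· ≤ ·)).getD (t - j) 0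

/-- The expectation of the `j`-th largest of `t` i.i.d. draws from `μ`. -/
noncomputable def orderStatExp (μ : Measure ℝ) (j t : ℕ) : ℝ :=
  ∫ v, orderStat t j v ∂(Measure.pi fun _ : Fin t => μ)

section Aux

lemma countP_ofFn (t : ℕ) (v : Fin t → ℝ) (c : ℝ) :
    (List.ofFn v).countP (fun x => decide (c < x)) = (Finset.univ.filter (fun i => c < v i)).card := by
  rw [List.ofFn_eq_map, List.countP_map]
  simp [List.countP_eq_length_filter, Finset.filter, Finset.card]
  rfl

lemma sorted_getElem_mono {l : List ℝ} (hs : l.Pairwise (· ≤ ·)) {a b : ℕ} (hab : a ≤ b)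
    (hb : b < l.length) : l[a]'(lt_of_le_of_lt hab hb) ≤ l[b] := by
  rcases eq_or_lt_of_le hab with rfl | h
  · exact le_rfl
  · exact List.pairwise_iff_getElem.mp hs a b _ hb h

lemma orderStat_gt_iff (t j : ℕ) (hj : 1 ≤ j) (hjt : j ≤ t) (v : Fin t → ℝ) (c : ℝ) :
    c < orderStat t j v ↔ j ≤ (Finset.univ.filter fun i => c < v i).card := by
  set l := (List.ofFn v).insertionSort (· ≤ ·) with hl
  have hsort : l.Pairwise (· ≤ ·) := List.pairwise_insertionSort _ _
  have hlen : l.length = t := by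
    rw [hl, List.length_insertionSort, List.length_ofFn]
  have hcount : l.countP (fun x => decide (c < x)) = (Finset.univ.filter fun i => c < v i).card := by
    rw [← countP_ofFn t v c]
    exact List.Perm.countP_eq _ (List.perm_insertionSort _ _)
  rw [← hcount]
  have hidx : t - j < l.length := by omega
  have hgd : orderStat t j v = l[t - j] := by
    rw [orderStat, ← hl, List.getD_eq_getElem l 0 hidx]
  rw [hgd]
  have hlend : (l.drop (t - j)).length = j := by rw [List.length_drop, hlen]; omega
  constructor
  · intro h
    have hdrop : (l.drop (t - j)).countP (fun x => decide (c < x)) = (l.drop (t-j)).length := by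
      rw [List.countP_eq_length]
      intro a ha
      obtain ⟨i, hi, rfl⟩ := List.mem_iff_getElem.mp ha
      rw [List.getElem_drop]
      have hb : t - j + i < l.length := by rw [hlend] at hi; omega
      have : c < l[t - j + i] := lt_of_lt_of_le h (sorted_getElem_mono hsort (Nat.le_add_right _ _) hb)
      simpa using this
    have h1 : j ≤ (l.drop (t - j)).countP (fun x => decide (c < x)) := by
      rw [hdrop, hlend]
    exact le_trans h1 ((List.drop_sublist _ _).countP_le)
  · intro h
    by_contra hc
    push_neg at hc
    have h1 : (l.take (t-j+1)).countP (fun x => decide (c < x)) = 0 := by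
      rw [List.countP_eq_zero]
      intro a ha
      obtain ⟨i, hi, rfl⟩ := List.mem_iff_getElem.mp ha
      rw [List.getElem_take]
      have hi' : i ≤ t - j := by
        have h2 := hi
        simp only [List.length_take, hlen] at h2
        omega
      simpa using not_lt.mpr (le_trans (sorted_getElem_mono hsort hi' hidx) hc)
    have hsplit : l.countP (fun x => decide (c < x))
        = (l.take (t-j+1)).countP (fun x => decide (c < x))
          + (l.drop (t-j+1)).countP (fun x => decide (c < x)) := by
      conv_lhs => rw [← List.take_append_drop (t-j+1) l]
      exact List.countP_append
    have h3 := List.countP_le_length (p := fun x => decide (c < x)) (l := l.drop (t-j+1))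
    rw [List.length_drop, hlen] at h3
    omega

lemma measurable_Ncard (t : ℕ) (c : ℝ) :
    Measurable (fun v : Fin t → ℝ => (Finset.univ.filter fun i => c < v i).card) := by
  simp only [Finset.card_filter]
  exact Finset.measurable_sum _ (fun i _ => Measurable.ite
    ((measurable_pi_apply i) measurableSet_Ioi) measurable_const measurable_const)

lemma measurableSet_ge_card (t j : ℕ) (c : ℝ) :
    MeasurableSet {v : Fin t → ℝ | j ≤ (Finset.univ.filter fun i => c < v i).card} :=
  measurable_Ncard t c measurableSet_Ici

lemma meas_coord_set (μ : Measure ℝ) [IsProbabilityMeasure μ] (t : ℕ) (i : Fin t)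
    (S : Set ℝ) :
    (Measure.pi fun _ : Fin t => μ) {v | v i ∈ S} = μ S := by
  have hset : {v : Fin t → ℝ | v i ∈ S}
      = Set.pi Set.univ (Function.update (fun _ : Fin t => (Set.univ : Set ℝ)) i S) := by
    ext v
    simp only [Set.mem_setOf_eq, Set.mem_pi, Set.mem_univ, forall_true_left]
    constructor
    · intro h j
      rcases eq_or_ne j i with rfl | hne
      · simpa using h
      · simp [Function.update_of_ne hne]
    · intro h
      have := h i
      simpa using this
  rw [hset, Measure.pi_pi]
  rw [Fintype.prod_eq_single i (fun j hj => by simp [Function.update_of_ne hj])]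
  simp

lemma meas_all_le (μ : Measure ℝ) [IsProbabilityMeasure μ] (t : ℕ) (c : ℝ) :
    (Measure.pi fun _ : Fin t => μ) {v | ∀ i, v i ≤ c} = μ (Iic c) ^ t := by
  have hset : {v : Fin t → ℝ | ∀ i, v i ≤ c} = Set.pi Set.univ (fun _ : Fin t => Iic c) := by
    ext v; simp only [Set.mem_setOf_eq, Set.mem_pi, Set.mem_univ, forall_true_left, Set.mem_Iic]
  rw [hset, Measure.pi_pi, Finset.prod_const, Finset.card_univ, Fintype.card_fin]

lemma surv_set_eq (t j : ℕ) (hj : 1 ≤ j) (hjt : j ≤ t) (c : ℝ) :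
    {v : Fin t → ℝ | c < orderStat t j v}
      = {v : Fin t → ℝ | j ≤ (Finset.univ.filter fun i => c < v i).card} := by
  ext v; exact orderStat_gt_iff t j hj hjt v c

lemma measurable_orderStat (t j : ℕ) (hj : 1 ≤ j) (hjt : j ≤ t) : Measurable (orderStat t j) := by
  apply measurable_of_Ioi
  intro c
  have : orderStat t j ⁻¹' Ioi c = {v | c < orderStat t j v} := rfl
  rw [this, surv_set_eq t j hj hjt]
  exact measurableSet_ge_card t j c

lemma surv_max (μ : Measure ℝ) [IsProbabilityMeasure μ] (t : ℕ) (ht : 1 ≤ t) (c : ℝ) :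
    (Measure.pi fun _ : Fin t => μ) {v | c < orderStat t 1 v} = 1 - μ (Iic c) ^ t := by
  have hset : {v : Fin t → ℝ | c < orderStat t 1 v} = {v : Fin t → ℝ | ∀ i, v i ≤ c}ᶜ := by
    rw [surv_set_eq t 1 le_rfl ht]
    ext v
    simp only [Set.mem_setOf_eq, Set.mem_compl_iff, not_forall, not_le,
      Finset.one_le_card, Finset.filter_nonempty_iff, Finset.mem_univ, true_and]
  have hms : MeasurableSet {v : Fin t → ℝ | ∀ i, v i ≤ c} := by
    have : {v : Fin t → ℝ | ∀ i, v i ≤ c} = ⋂ i, {v | v i ≤ c} := by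
      ext v; simp
    rw [this]
    exact MeasurableSet.iInter fun i => (measurable_pi_apply i) measurableSet_Iic
  rw [hset, prob_compl_eq_one_sub hms, meas_all_le μ t c]

lemma lintegral_Ncard (μ : Measure ℝ) [IsProbabilityMeasure μ] (t : ℕ) (c : ℝ) :
    ∫⁻ v, ((Finset.univ.filter fun i => c < v i).card : ℝ≥0∞)
        ∂(Measure.pi fun _ : Fin t => μ) = t * μ (Ioi c) := by
  have hpt : ∀ v : Fin t → ℝ, ((Finset.univ.filter fun i => c < v i).card : ℝ≥0∞)
      = ∑ i : Fin t, Set.indicator {v : Fin t → ℝ | c < v i} (1 : (Fin t → ℝ) → ℝ≥0∞) v := by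
    intro v
    rw [Finset.card_filter, Nat.cast_sum]
    congr 1; ext i
    by_cases h : c < v i <;> simp [Set.indicator, h]
  simp_rw [hpt]
  rw [lintegral_finset_sum]
  · have : ∀ i : Fin t, ∫⁻ v, Set.indicator {v : Fin t → ℝ | c < v i} (1 : (Fin t → ℝ) → ℝ≥0∞) v
        ∂(Measure.pi fun _ : Fin t => μ) = μ (Ioi c) := by
      intro i
      have hms : MeasurableSet {v : Fin t → ℝ | c < v i} := (measurable_pi_apply i) measurableSet_Ioi
      rw [lintegral_indicator_one hms]
      exact meas_coord_set μ t i (Ioi c)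
    simp_rw [this, Finset.sum_const, Finset.card_univ, Fintype.card_fin, nsmul_eq_mul]
  · intro i _
    exact (measurable_const.indicator ((measurable_pi_apply i) measurableSet_Ioi))

lemma sum_meas_le (μ : Measure ℝ) [IsProbabilityMeasure μ] (t k : ℕ) (c : ℝ) :
    ∑ j ∈ Finset.Icc 1 k, (Measure.pi fun _ : Fin t => μ)
        {v | j ≤ (Finset.univ.filter fun i => c < v i).card} ≤ t * μ (Ioi c) := by
  rw [← lintegral_Ncard μ t c]
  have : ∀ j ∈ Finset.Icc 1 k, (Measure.pi fun _ : Fin t => μ)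
      {v | j ≤ (Finset.univ.filter fun i => c < v i).card}
      = ∫⁻ v, Set.indicator {v : Fin t → ℝ | j ≤ (Finset.univ.filter fun i => c < v i).card}
          (1 : (Fin t → ℝ) → ℝ≥0∞) v ∂(Measure.pi fun _ : Fin t => μ) := by
    intro j _
    exact (lintegral_indicator_one (measurableSet_ge_card t j c)).symm
  rw [Finset.sum_congr rfl this, ← lintegral_finset_sum]
  · apply lintegral_mono
    intro v
    show ∑ j ∈ Finset.Icc 1 k, Set.indicator
        {v : Fin t → ℝ | j ≤ (Finset.univ.filter fun i => c < v i).card}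
        (1 : (Fin t → ℝ) → ℝ≥0∞) v ≤ ((Finset.univ.filter fun i => c < v i).card : ℝ≥0∞)
    set N := (Finset.univ.filter fun i => c < v i).card with hN
    have : ∑ j ∈ Finset.Icc 1 k, Set.indicator
        {v : Fin t → ℝ | j ≤ (Finset.univ.filter fun i => c < v i).card} (1 : (Fin t → ℝ) → ℝ≥0∞) v
        = (((Finset.Icc 1 k).filter fun j => j ≤ N).card : ℝ≥0∞) := by
      rw [Finset.card_filter, Nat.cast_sum]
      apply Finset.sum_congr rfl
      intro j _
      by_cases h : j ≤ N <;> simp [Set.indicator, h, hN]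
    rw [this]
    have hsub : ((Finset.Icc 1 k).filter fun j => j ≤ N) ⊆ Finset.Icc 1 N := by
      intro j hj
      simp only [Finset.mem_filter, Finset.mem_Icc] at hj ⊢
      exact ⟨hj.1.1, hj.2⟩
    have := Finset.card_le_card hsub
    rw [Nat.card_Icc] at this
    exact_mod_cast le_trans (Nat.cast_le.mpr this) (by simp)
  · intro j _
    exact measurable_const.indicator (measurableSet_ge_card t j c)

lemma ae_nonneg (μ : Measure ℝ) [IsProbabilityMeasure μ] (hsupp : μ (Set.Iio 0) = 0)
    (t j : ℕ) : 0 ≤ᵐ[Measure.pi fun _ : Fin t => μ] orderStat t j := by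
  have hA : (Measure.pi fun _ : Fin t => μ) {v | ¬ ∀ i, 0 ≤ v i} = 0 := by
    have hsub : {v : Fin t → ℝ | ¬ ∀ i, 0 ≤ v i} ⊆ ⋃ i, {v | v i ∈ Set.Iio 0} := by
      intro v hv
      push_neg at hv
      obtain ⟨i, hi⟩ := hv
      exact Set.mem_iUnion.mpr ⟨i, by simpa using hi⟩
    apply measure_mono_null hsub
    apply measure_iUnion_null
    intro i
    rw [meas_coord_set μ t i _]
    exact hsupp
  rw [Filter.EventuallyLE, ae_iff]
  apply measure_mono_null _ hA
  intro v hv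
  simp only [Set.mem_setOf_eq] at hv ⊢
  intro hall
  apply hv
  set l := (List.ofFn v).insertionSort (· ≤ ·) with hl
  show (0:ℝ) ≤ l.getD (t - j) 0
  by_cases hlt : t - j < l.length
  · rw [List.getD_eq_getElem l 0 hlt]
    have hmem : l[t-j] ∈ l := List.getElem_mem _
    have : l[t-j] ∈ List.ofFn v := ((List.perm_insertionSort _ _)).mem_iff.mp hmem
    obtain ⟨i, hi⟩ := List.mem_ofFn.mp this
    rw [← hi]
    exact hall i
  · rw [List.getD_eq_default l 0 (not_lt.mp hlt)]

lemma exp_convex_bound (x : ℝ) (h0 : 0 ≤ x) (h1 : x ≤ 1) :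
    Real.exp (-x) ≤ 1 - (1 - Real.exp (-1)) * x := by
  have h := convexOn_exp.2 (Set.mem_univ (0:ℝ)) (Set.mem_univ (-1:ℝ))
    (by linarith : (0:ℝ) ≤ 1 - x) h0 (by ring)
  simp only [smul_eq_mul, mul_zero, mul_neg_one, zero_add, Real.exp_zero, mul_one] at h
  nlinarith [h]

lemma pow_le_exp_neg (p : ℝ) (h0 : 0 ≤ p) (h1 : p ≤ 1) (s : ℕ) :
    (1 - p) ^ s ≤ Real.exp (-(s * p)) := by
  have h : 1 - p ≤ Real.exp (-p) := by
    have := Real.add_one_le_exp (-p); linarith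
  calc (1 - p) ^ s ≤ (Real.exp (-p)) ^ s := pow_le_pow_left₀ (by linarith) h s
    _ = Real.exp (-(s * p)) := by rw [← Real.exp_nat_mul]; ring_nf

lemma key_ineq (k n s : ℕ) (hks : (n : ℝ) ≤ k * s)
    (q : ℝ) (hq0 : 0 ≤ q) (hq1 : q ≤ 1) (A : ℝ)
    (hAk : A ≤ k) (hAnp : A ≤ n * (1 - q)) :
    (1 - 1 / Real.exp 1) * A ≤ k * (1 - q ^ s) := by
  have he : Real.exp (-1) = 1 / Real.exp 1 := by
    rw [Real.exp_neg]; ring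
  have he1 : (1:ℝ) ≤ Real.exp 1 := by
    have := Real.add_one_le_exp (1:ℝ); linarith
  have hepos : (0:ℝ) < Real.exp 1 := Real.exp_pos 1
  have hC0 : (0:ℝ) ≤ 1 - 1 / Real.exp 1 := by
    have : 1 / Real.exp 1 ≤ 1 := by
      rw [div_le_one hepos]; exact he1
    linarith
  set p := 1 - q with hp
  have hp0 : 0 ≤ p := by simp [hp]; linarith
  have hp1 : p ≤ 1 := by simp [hp]; linarith
  have hqs : q ^ s ≤ Real.exp (-(s * p)) := by
    have := pow_le_exp_neg p hp0 hp1 s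
    simpa [hp] using this
  have hk0 : (0:ℝ) ≤ k := Nat.cast_nonneg k
  by_cases hsp : 1 ≤ (s:ℝ) * p
  · have h2 : Real.exp (-(s * p)) ≤ Real.exp (-1) := by
      apply Real.exp_le_exp.mpr; linarith
    have h3 : q ^ s ≤ 1 / Real.exp 1 := by rw [← he]; linarith
    nlinarith
  · push_neg at hsp
    have hsp0 : 0 ≤ (s:ℝ) * p := by positivity
    have h2 := exp_convex_bound ((s:ℝ) * p) hsp0 (le_of_lt hsp)
    rw [he] at h2
    have h3 : (1 - 1/Real.exp 1) * ((s:ℝ) * p) ≤ 1 - q ^ s := by nlinarith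
    have h4 : (1 - 1/Real.exp 1) * ((n:ℝ) * p) ≤ (k:ℝ) * (1 - q ^ s) := by
      have : (1 - 1/Real.exp 1) * ((n:ℝ) * p) ≤ (1 - 1/Real.exp 1) * ((k:ℝ) * s * p) := by
        apply mul_le_mul_of_nonneg_left _ hC0
        nlinarith
      calc (1 - 1/Real.exp 1) * ((n:ℝ) * p) ≤ (1 - 1/Real.exp 1) * ((k:ℝ) * s * p) := this
        _ = (k:ℝ) * ((1 - 1/Real.exp 1) * ((s:ℝ) * p)) := by ring
        _ ≤ (k:ℝ) * (1 - q ^ s) := by nlinarith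
    exact le_trans (mul_le_mul_of_nonneg_left hAnp hC0) h4

end Aux

theorem stmt0 (μ : Measure ℝ) [IsProbabilityMeasure μ]
    (hsupp : μ (Set.Iio 0) = 0)
    (n k : ℕ) (hk : 1 ≤ k) (hkn : k ≤ n)
    (s : ℕ) (hs : s = ⌈(n : ℝ) / k⌉₊)
    (hint : Integrable (orderStat n 1) (Measure.pi fun _ : Fin n => μ)) :
    (k : ℝ) * orderStatExp μ 1 s ≥
      (1 - 1 / Real.exp 1) * ∑ j ∈ Finset.Icc 1 k, orderStatExp μ j n := by
  classical
  set Pn := (Measure.pi fun _ : Fin n => μ) with hPn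
  set Ps := (Measure.pi fun _ : Fin s => μ) with hPs
  have hn1 : 1 ≤ n := le_trans hk hkn
  have hkR : (0:ℝ) < k := by exact_mod_cast hk
  have hs1 : 1 ≤ s := by
    rw [hs]
    rw [Nat.one_le_ceil_iff]
    positivity
  have hsn : s ≤ n := by
    rw [hs]
    apply Nat.ceil_le.mpr
    rw [div_le_iff₀ hkR]
    have : (1:ℝ) ≤ k := by exact_mod_cast hk
    nlinarith [Nat.cast_nonneg (α := ℝ) n]
  have hks : (n:ℝ) ≤ k * s := by
    have h1 := Nat.le_ceil ((n:ℝ)/k)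
    rw [← hs] at h1
    rw [div_le_iff₀ hkR] at h1
    nlinarith
  have hC0 : (0:ℝ) ≤ 1 - 1 / Real.exp 1 := by
    have he1 : (1:ℝ) ≤ Real.exp 1 := by
      have := Real.add_one_le_exp (1:ℝ); linarith
    have : 1 / Real.exp 1 ≤ 1 := by
      rw [div_le_one (Real.exp_pos 1)]; exact he1
    linarith
  set C := ENNReal.ofReal (1 - 1 / Real.exp 1) with hC
  have hnn_n : ∀ j : ℕ, 0 ≤ᵐ[Pn] orderStat n j := fun j => ae_nonneg μ hsupp n j
  have hnn_s : 0 ≤ᵐ[Ps] orderStat s 1 := ae_nonneg μ hsupp s 1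
  have hms : Measurable (orderStat s 1) := measurable_orderStat s 1 le_rfl hs1
  have hmn : ∀ j ∈ Finset.Icc 1 k, Measurable (orderStat n j) := fun j hj =>
    measurable_orderStat n j (Finset.mem_Icc.mp hj).1 (le_trans (Finset.mem_Icc.mp hj).2 hkn)
  set L := ∫⁻ v, ENNReal.ofReal (orderStat s 1 v) ∂Ps with hL
  set R := fun j => ∫⁻ v, ENNReal.ofReal (orderStat n j v) ∂Pn with hR
  have hLeq : L = ∫⁻ x in Ioi (0:ℝ), Ps {v | x < orderStat s 1 v} :=
    lintegral_eq_lintegral_meas_lt Ps hnn_s hms.aemeasurable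
  have hReq : ∀ j ∈ Finset.Icc 1 k, R j = ∫⁻ x in Ioi (0:ℝ), Pn {v | x < orderStat n j v} :=
    fun j hj => lintegral_eq_lintegral_meas_lt Pn (hnn_n j) (hmn j hj).aemeasurable
  have hR1eq : R 1 = ∫⁻ x in Ioi (0:ℝ), Pn {v | x < orderStat n 1 v} :=
    lintegral_eq_lintegral_meas_lt Pn (hnn_n 1)
      (measurable_orderStat n 1 le_rfl hn1).aemeasurable
  -- R 1 is finite
  have hR1fin : R 1 ≠ ∞ := by
    have h1 := hint.2
    rw [hasFiniteIntegral_def] at h1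
    refine ne_of_lt (lt_of_le_of_lt (lintegral_mono fun v => ?_) h1)
    rw [← ofReal_norm, Real.norm_eq_abs]
    exact ENNReal.ofReal_le_ofReal (le_abs_self _)
  -- domination: R j ≤ R 1 for j ∈ Icc 1 k
  have hRle : ∀ j ∈ Finset.Icc 1 k, R j ≤ R 1 := by
    intro j hj
    obtain ⟨hj1, hjk⟩ := Finset.mem_Icc.mp hj
    rw [hReq j hj, hR1eq]
    apply lintegral_mono
    intro x
    apply measure_mono
    rw [surv_set_eq n j hj1 (le_trans hjk hkn), surv_set_eq n 1 le_rfl hn1]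
    intro v hv
    simp only [Set.mem_setOf_eq] at hv ⊢
    omega
  have hRfin : ∀ j ∈ Finset.Icc 1 k, R j ≠ ∞ := fun j hj =>
    ne_top_of_le_ne_top hR1fin (hRle j hj)
  -- L ≤ R 1, hence finite
  have hLle : L ≤ R 1 := by
    rw [hLeq, hR1eq]
    apply lintegral_mono
    intro x
    show Ps {v | x < orderStat s 1 v} ≤ Pn {v | x < orderStat n 1 v}
    rw [surv_max μ s hs1 x, surv_max μ n hn1 x]
    apply tsub_le_tsub_left
    exact pow_le_pow_right_of_le_one' (prob_le_one) hsn
  have hLfin : L ≠ ∞ := ne_top_of_le_ne_top hR1fin hLle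
  -- pointwise key inequality
  have hpt : ∀ x : ℝ, C * ∑ j ∈ Finset.Icc 1 k, Pn {v | x < orderStat n j v}
      ≤ (k : ℝ≥0∞) * Ps {v | x < orderStat s 1 v} := by
    intro x
    have hSmax : Ps {v | x < orderStat s 1 v} = 1 - μ (Iic x) ^ s := surv_max μ s hs1 x
    have hsum_rw : ∑ j ∈ Finset.Icc 1 k, Pn {v | x < orderStat n j v}
        = ∑ j ∈ Finset.Icc 1 k, Pn {v | j ≤ (Finset.univ.filter fun i => x < v i).card} := by
      apply Finset.sum_congr rfl
      intro j hj
      obtain ⟨hj1, hjk⟩ := Finset.mem_Icc.mp hj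
      rw [surv_set_eq n j hj1 (le_trans hjk hkn)]
    set S := ∑ j ∈ Finset.Icc 1 k, Pn {v | x < orderStat n j v} with hSdef
    have hSk : S ≤ (k : ℝ≥0∞) := by
      rw [hSdef]
      calc ∑ j ∈ Finset.Icc 1 k, Pn {v | x < orderStat n j v}
          ≤ ∑ _j ∈ Finset.Icc 1 k, 1 := Finset.sum_le_sum (fun j _ => prob_le_one)
        _ = (k : ℝ≥0∞) := by rw [Finset.sum_const, Nat.card_Icc]; simp
    have hSnp : S ≤ (n : ℝ≥0∞) * μ (Ioi x) := by
      rw [hsum_rw]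
      exact sum_meas_le μ n k x
    have hSfin : S ≠ ∞ := ne_top_of_le_ne_top (ENNReal.natCast_ne_top k) hSk
    set q := μ (Iic x) with hq
    have hq1 : q ≤ 1 := prob_le_one
    have hqfin : q ≠ ∞ := ne_top_of_le_ne_top ENNReal.one_ne_top hq1
    have hqtr1 : q.toReal ≤ 1 := by
      have := ENNReal.toReal_mono ENNReal.one_ne_top hq1
      simpa using this
    have hptr : (μ (Ioi x)).toReal = 1 - q.toReal := by
      have hcompl : μ (Ioi x) = 1 - q := by
        rw [hq, ← Set.compl_Iic]
        rw [prob_compl_eq_one_sub measurableSet_Iic]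
      rw [hcompl, ENNReal.toReal_sub_of_le hq1 ENNReal.one_ne_top, ENNReal.toReal_one]
    -- use key_ineq via toReal
    have hAk : S.toReal ≤ (k : ℝ) := by
      have := ENNReal.toReal_mono (ENNReal.natCast_ne_top k) hSk
      simpa using this
    have hAnp : S.toReal ≤ (n : ℝ) * (1 - q.toReal) := by
      have hfin : (n : ℝ≥0∞) * μ (Ioi x) ≠ ∞ :=
        ENNReal.mul_ne_top (ENNReal.natCast_ne_top n) (measure_ne_top μ _)
      have := ENNReal.toReal_mono hfin hSnp
      rw [ENNReal.toReal_mul, ENNReal.toReal_natCast, hptr] at this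
      exact this
    have hkey := key_ineq k n s hks q.toReal ENNReal.toReal_nonneg hqtr1 S.toReal hAk hAnp
    -- convert to ℝ≥0∞
    rw [hSmax]
    have hlhs_fin : C * S ≠ ∞ := ENNReal.mul_ne_top ENNReal.ofReal_ne_top hSfin
    have hrhs_fin : (k : ℝ≥0∞) * (1 - q ^ s) ≠ ∞ :=
      ENNReal.mul_ne_top (ENNReal.natCast_ne_top k)
        (ne_top_of_le_ne_top ENNReal.one_ne_top tsub_le_self)
    rw [← ENNReal.toReal_le_toReal hlhs_fin hrhs_fin]
    have hqs1 : q ^ s ≤ 1 := pow_le_one' hq1 s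
    rw [ENNReal.toReal_mul, ENNReal.toReal_mul, ENNReal.toReal_ofReal hC0,
      ENNReal.toReal_natCast, ENNReal.toReal_sub_of_le hqs1 ENNReal.one_ne_top,
      ENNReal.toReal_one, ENNReal.toReal_pow]
    exact hkey
  -- main lintegral inequality
  have hanti : ∀ j : ℕ, Measurable (fun x : ℝ => Pn {v | x < orderStat n j v}) := by
    intro j
    apply Antitone.measurable
    intro x y hxy
    exact measure_mono (fun v hv => lt_of_le_of_lt hxy hv)
  have hantiS : Measurable (fun x : ℝ => Ps {v | x < orderStat s 1 v}) := by
    apply Antitone.measurable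
    intro x y hxy
    exact measure_mono (fun v hv => lt_of_le_of_lt hxy hv)
  have hmain : C * ∑ j ∈ Finset.Icc 1 k, R j ≤ (k : ℝ≥0∞) * L := by
    calc C * ∑ j ∈ Finset.Icc 1 k, R j
        = C * ∑ j ∈ Finset.Icc 1 k, ∫⁻ x in Ioi (0:ℝ), Pn {v | x < orderStat n j v} := by
          rw [Finset.sum_congr rfl hReq]
      _ = C * ∫⁻ x in Ioi (0:ℝ), ∑ j ∈ Finset.Icc 1 k, Pn {v | x < orderStat n j v} := by
          rw [lintegral_finset_sum _ (fun j _ => (hanti j))]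
      _ = ∫⁻ x in Ioi (0:ℝ), C * ∑ j ∈ Finset.Icc 1 k, Pn {v | x < orderStat n j v} := by
          rw [lintegral_const_mul C (Finset.measurable_sum _ (fun j _ => hanti j))]
      _ ≤ ∫⁻ x in Ioi (0:ℝ), (k : ℝ≥0∞) * Ps {v | x < orderStat s 1 v} :=
          lintegral_mono (fun x => hpt x)
      _ = (k : ℝ≥0∞) * ∫⁻ x in Ioi (0:ℝ), Ps {v | x < orderStat s 1 v} :=
          lintegral_const_mul _ hantiS
      _ = (k : ℝ≥0∞) * L := by rw [← hLeq]
  -- Bochner integral identification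
  have hExp_s : orderStatExp μ 1 s = L.toReal := by
    rw [orderStatExp, integral_eq_lintegral_of_nonneg_ae hnn_s hms.aestronglyMeasurable]
  have hExp_n : ∀ j ∈ Finset.Icc 1 k, orderStatExp μ j n = (R j).toReal := by
    intro j hj
    rw [orderStatExp, integral_eq_lintegral_of_nonneg_ae (hnn_n j) (hmn j hj).aestronglyMeasurable]
  rw [ge_iff_le, Finset.sum_congr rfl hExp_n, hExp_s]
  rw [← ENNReal.toReal_sum hRfin]
  have h1 : (1 - 1 / Real.exp 1) * (∑ j ∈ Finset.Icc 1 k, R j).toReal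
      = (C * ∑ j ∈ Finset.Icc 1 k, R j).toReal := by
    rw [ENNReal.toReal_mul, ENNReal.toReal_ofReal hC0]
  rw [h1]
  have h2 : ((k : ℝ≥0∞) * L).toReal = (k : ℝ) * L.toReal := by
    rw [ENNReal.toReal_mul, ENNReal.toReal_natCast]
  rw [← h2]
  apply ENNReal.toReal_mono _ hmain
  exact ENNReal.mul_ne_top (ENNReal.natCast_ne_top k) hLfin
end

section
/- Let λ ∈ [0,1], n ≥ 1 an integer, and F twice differentiable on an open interval I with f = F' > 0 and 0 < F < 1 on I. If v ↦ λv − (1 − F(v))/f(v) is nondecreasing on I, then v ↦ λv − (1 − F(v)^n)/(n·F(v)^{n−1}·f(v)) is nondecreasing on I. That is, the distribution of the maximum of n i.i.d. draws from F (which has CDF F^n and density n·F^{n−1}·f) is again λ-regular. -/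
open Finset

private lemma geom_aux (u : ℝ) (h0 : 0 ≤ u) (h1 : u ≤ 1) (m : ℕ) :
    ((m:ℝ)+1) * u^m * (1-u) ≤ 1 - u^(m+1) := by
  have hsum : ((m:ℝ)+1) * u^m ≤ ∑ j ∈ Finset.range (m+1), u^j := by
    have h : ∀ j ∈ Finset.range (m+1), u^m ≤ u^j := fun j hj =>
      pow_le_pow_of_le_one h0 h1 (Nat.le_of_lt_succ (Finset.mem_range.1 hj))
    have := Finset.card_nsmul_le_sum (Finset.range (m+1)) (fun j => u^j) (u^m) h
    simpa [nsmul_eq_mul, add_comm] using this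
  have hgeom : (∑ j ∈ Finset.range (m+1), u^j) * (u - 1) = u^(m+1) - 1 :=
    geom_sum_mul u (m+1)
  have h2 : ((m:ℝ)+1)*u^m*(1-u) ≤ (∑ j ∈ Finset.range (m+1), u^j)*(1-u) :=
    mul_le_mul_of_nonneg_right hsum (by linarith)
  nlinarith [h2, hgeom]

private lemma sum_bound (u : ℝ) (h0 : 0 ≤ u) (h1 : u ≤ 1) :
    ∀ N : ℕ, 2 * ∑ j ∈ Finset.range (N+1), u^j ≤ ((N:ℝ)+2) + (N:ℝ)*u^(N+1) := by
  intro N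
  induction N with
  | zero => simp
  | succ k ih =>
    rw [Finset.sum_range_succ]
    have hb := geom_aux u h0 h1 (k+1)
    push_cast at hb
    push_cast
    simp only [pow_succ] at ih hb ⊢
    linarith [ih, hb]

private lemma star_aux (u : ℝ) (h0 : 0 ≤ u) (h1 : u ≤ 1) (N : ℕ) :
    2*u*(1-u^(N+1)) ≤ 2*((N:ℝ)+1)*u^(N+1)*(1-u) + (N:ℝ)*(1-u)*(1-u^(N+1)) := by
  have hs := sum_bound u h0 h1 N
  have hgeom : (∑ j ∈ Finset.range (N+1), u^j) * (u - 1) = u^(N+1) - 1 :=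
    geom_sum_mul u (N+1)
  have h2 := mul_le_mul_of_nonneg_left hs (by linarith : (0:ℝ) ≤ 1-u)
  nlinarith [h2, hgeom]

private lemma deriv_nonneg_of_monotoneOn {I : Set ℝ} (hIopen : IsOpen I) {g : ℝ → ℝ}
    {x c : ℝ} (hmono : MonotoneOn g I) (hx : x ∈ I) (hd : HasDerivAt g c x) : 0 ≤ c := by
  have ht : Filter.Tendsto (slope g x) (nhdsWithin x (Set.Ioi x)) (nhds c) :=
    (hasDerivAt_iff_tendsto_slope.1 hd).mono_left
      (nhdsWithin_mono x fun y hy => Set.mem_compl_singleton_iff.2 (ne_of_gt hy))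
  refine ge_of_tendsto ht ?_
  have hxI : ∀ᶠ y in nhdsWithin x (Set.Ioi x), y ∈ I :=
    Filter.Eventually.filter_mono nhdsWithin_le_nhds (hIopen.eventually_mem hx)
  filter_upwards [hxI, self_mem_nhdsWithin] with y hyI hyx
  rw [slope_def_field]
  exact div_nonneg (sub_nonneg.2 (hmono hx hyI (le_of_lt hyx)))
    (sub_nonneg.2 (le_of_lt hyx))

set_option maxHeartbeats 1000000 in
theorem stmt3 (lam : ℝ) (hlam : lam ∈ Set.Icc (0:ℝ) 1) (n : ℕ) (hn : 1 ≤ n)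
    (I : Set ℝ) (hIopen : IsOpen I) (hIconn : I.OrdConnected)
    (F f f' : ℝ → ℝ)
    (hF : ∀ x ∈ I, HasDerivAt F (f x) x)
    (hf : ∀ x ∈ I, HasDerivAt f (f' x) x)
    (hfpos : ∀ x ∈ I, 0 < f x)
    (hF01 : ∀ x ∈ I, 0 < F x ∧ F x < 1)
    (hreg : MonotoneOn (fun v => lam * v - (1 - F v) / f v) I) :
    MonotoneOn
      (fun v => lam * v - (1 - (F v) ^ n) / ((n : ℝ) * (F v) ^ (n - 1) * f v)) I := by
  obtain ⟨hlam0, hlam1⟩ := hlam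
  obtain ⟨m, rfl⟩ : ∃ m, n = m + 1 := ⟨n - 1, (Nat.succ_pred_eq_of_pos hn).symm⟩
  have hconv : Convex ℝ I := (convex_iff_ordConnected).2 hIconn
  -- the derivative of the target function at each point of I
  have hd : ∀ x ∈ I, HasDerivAt
      (fun v => lam * v - (1 - F v ^ (m+1)) / ((↑(m+1) : ℝ) * F v ^ (m+1-1) * f v))
      (lam - ((-( (↑(m+1):ℝ) * F x ^ (m+1-1) * f x)) * ((↑(m+1):ℝ) * F x ^ (m+1-1) * f x)
        - (1 - F x ^ (m+1)) * ((↑(m+1):ℝ) * ((↑(m+1-1):ℝ) * F x ^ (m+1-1-1) * f x) * f x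
          + (↑(m+1):ℝ) * F x ^ (m+1-1) * f' x))
        / ((↑(m+1):ℝ) * F x ^ (m+1-1) * f x)^2) x := by
    intro x hx
    have hFx := hF x hx
    have hfx := hf x hx
    have hu0 := (hF01 x hx).1
    have hφ := hfpos x hx
    have hne : (↑(m+1):ℝ) * F x ^ (m+1-1) * f x ≠ 0 := by positivity
    have hlin : HasDerivAt (fun v : ℝ => lam * v) lam x := by
      simpa using (hasDerivAt_id x).const_mul lam
    exact hlin.sub (((hFx.pow (m+1)).const_sub 1).div
      (((hFx.pow (m+1-1)).const_mul ((↑(m+1):ℝ))).mul hfx) hne)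
  apply monotoneOn_of_deriv_nonneg hconv
  · exact fun x hx => ((hd x hx).continuousAt).continuousWithinAt
  · rw [hIopen.interior_eq]
    exact fun x hx => ((hd x hx).differentiableAt).differentiableWithinAt
  · rw [hIopen.interior_eq]
    intro x hx
    rw [(hd x hx).deriv]
    obtain ⟨hu0, hu1⟩ := hF01 x hx
    have hφ := hfpos x hx
    -- the λ-regularity hypothesis at x
    have E : 0 ≤ (lam+1) * f x ^ 2 + (1 - F x) * f' x := by
      have hlin : HasDerivAt (fun v : ℝ => lam * v) lam x := by
        simpa using (hasDerivAt_id x).const_mul lam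
      have hder2 := hlin.sub (((hF x hx).const_sub 1).div (hf x hx) (ne_of_gt hφ))
      have h0 := deriv_nonneg_of_monotoneOn hIopen hreg hx hder2
      have h1 : (-f x * f x - (1 - F x) * f' x) / f x ^ 2 ≤ lam := by linarith
      rw [div_le_iff₀ (by positivity)] at h1
      nlinarith [h1]
    -- the key polynomial inequality
    have G1 : 0 ≤ (lam+1)*((m:ℝ)+1)*(F x^m)^2*(f x)^2
        + (1 - F x^(m+1))*((m:ℝ)*F x^(m-1))*(f x)^2
        + (1 - F x^(m+1))*(F x^m)*(f' x) := by
      rcases m with _ | k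
      · norm_num
        nlinarith [E]
      · simp only [Nat.add_sub_cancel]
        push_cast
        set u := F x with hu
        set φ := f x with hφdef
        set p := f' x with hpdef
        have hA : (0:ℝ) ≤ u^k := pow_nonneg hu0.le k
        have hP2 : u^(k+2) ≤ 1 := pow_le_one₀ hu0.le hu1.le
        have bern := geom_aux u hu0.le hu1.le (k+1)
        push_cast at bern
        have star' := star_aux u hu0.le hu1.le (k+1)
        push_cast at star'
        obtain ⟨a, ha⟩ : ∃ a, u^k = a := ⟨_, rfl⟩
        have hA' : (0:ℝ) ≤ a := ha ▸ hA
        simp only [pow_succ, ha] at bern star' hP2 ⊢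
        -- bern : (↑k+1+1) * (a*u) * (1-u) ≤ 1 - a*u*u
        -- star' : 2*u*(1-a*u*u) ≤ 2*(↑k+1+1)*(a*u*u)*(1-u) + (↑k+1)*(1-u)*(1-a*u*u)
        have hau : (0:ℝ) ≤ a*u := mul_nonneg hA' hu0.le
        have hC : ((k:ℝ)+2)*(a*u)*(a*u)*(1-u) ≤ (a*u)*(1-a*u*u) := by
          have := mul_le_mul_of_nonneg_left bern hau
          nlinarith [this]
        have hEp : -((lam+1)*φ^2) ≤ (1-u)*p := by nlinarith [E]
        have hcoef : (0:ℝ) ≤ (1 - a*u*u) * (a*u) := mul_nonneg (by linarith) hau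
        have h5 := mul_le_mul_of_nonneg_left hEp hcoef
        have h6' : (0:ℝ) ≤ φ^2 * ((1-lam) * ((a*u)*(1-a*u*u)
            - ((k:ℝ)+2)*(a*u)*(a*u)*(1-u))) :=
          mul_nonneg (sq_nonneg φ) (mul_nonneg (by linarith) (by linarith [hC]))
        have starφ := mul_le_mul_of_nonneg_left
          (mul_le_mul_of_nonneg_left star' hA') (sq_nonneg φ)
        have h1u : (0:ℝ) < 1 - u := by linarith
        have final : (0:ℝ) ≤ (1-u) * ((lam+1)*((k:ℝ)+1+1)*(a*u*(a*u))*φ^2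
            + (1 - a*u*u)*(((k:ℝ)+1)*a)*φ^2 + (1 - a*u*u)*(a*u)*p) := by
          nlinarith [h5, h6', starφ]
        have hfin := (mul_nonneg_iff_of_pos_left h1u).mp final
        nlinarith [hfin]
    have hden : (0:ℝ) < ((↑(m+1):ℝ) * F x ^ (m+1-1) * f x)^2 := by positivity
    rw [sub_nonneg, div_le_iff₀ hden]
    simp only [Nat.add_sub_cancel] at G1 ⊢
    push_cast at G1 ⊢
    simp only [pow_succ] at G1 ⊢
    nlinarith [mul_nonneg (show (0:ℝ) ≤ (m:ℝ)+1 by positivity) G1]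
end

section
/- Let F be a CDF with density f on [a,b) whose hazard rate f/(1 − F) is nondecreasing on [a,b) (the MHR condition), and define the virtual value φ(v) = v − (1 − F(v))/f(v). Then for every v ∈ [a,b) with φ(v) ≥ a, we have 1 − F(φ(v)) ≤ e·(1 − F(v)). (This is the analytic content of Lemma 5: a monopolist intermediary facing a posted price p buys on behalf of a buyer with value v ≥ p with probability (1 − F(φ^{-1}(p)))/(1 − F(p)) ≥ 1/e.) -/
open MeasureTheory Filter

/-- `F` is a CDF with density `f` on `[a, b)` (where possibly `b = ∞`):
differentiable with positive derivative `f` there, `F a = 0`, `F` nondecreasing,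
and `F x → 1` as `x → b`. -/
def IsCDF (F f : ℝ → ℝ) (a : ℝ) (b : EReal) : Prop :=
  (a : EReal) < b ∧ Monotone F ∧ F a = 0 ∧
  (∀ x : ℝ, a ≤ x → (x : EReal) < b → HasDerivAt F (f x) x ∧ 0 < f x) ∧
  Tendsto F (Filter.comap (fun x : ℝ => (x : EReal)) (nhdsWithin b (Set.Iio b))) (nhds 1)

/-- `μ` is the probability measure on `[a, b)` induced by the CDF `F`. -/
def InducedBy (μ : Measure ℝ) (F : ℝ → ℝ) (a : ℝ) (b : EReal) : Prop :=
  IsProbabilityMeasure μ ∧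
  ∀ x : ℝ, a ≤ x → (x : EReal) < b → μ (Set.Iic x) = ENNReal.ofReal (F x)

/-- `λ`-regularity of the CDF `F` with density `f` on `[a, b)`. -/
def LambdaRegular (l : ℝ) (F f : ℝ → ℝ) (a : ℝ) (b : EReal) : Prop :=
  MonotoneOn (fun v => l * v - (1 - F v) / f v) {x : ℝ | a ≤ x ∧ (x : EReal) < b}

/-- `c(λ) = (1 - λ)^(1/λ)` for `λ ∈ (0,1]`, with `c(0) = 1/e`. -/
noncomputable def cReg (l : ℝ) : ℝ := if l = 0 then (Real.exp 1)⁻¹ else (1 - l) ^ (1 / l)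

lemma F_lt_one (F f : ℝ → ℝ) (a : ℝ) (b : EReal) (hF : IsCDF F f a b)
    (x : ℝ) (hx : a ≤ x) (hxb : (x : EReal) < b) : F x < 1 := by
  obtain ⟨hab, hmono, _, hd, htend⟩ := hF
  set L := Filter.comap (fun x : ℝ => (x : EReal)) (nhdsWithin b (Set.Iio b))
  have hne : L.NeBot := by
    refine Filter.comap_neBot fun t ht => ?_
    rw [mem_nhdsLT_iff_exists_Ioo_subset' hab] at ht
    obtain ⟨l', hl', hsub⟩ := ht
    obtain ⟨y, hy1, hy2⟩ := EReal.exists_between_coe_real (Set.mem_Iio.mp hl')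
    exact ⟨y, hsub ⟨hy1, hy2⟩⟩
  have hle : ∀ z : ℝ, a ≤ z → (z : EReal) < b → F z ≤ 1 := by
    intro z hz hzb
    refine ge_of_tendsto htend ?_
    have : Set.Ioi (z : EReal) ∈ nhdsWithin b (Set.Iio b) :=
      mem_nhdsWithin_of_mem_nhds (Ioi_mem_nhds hzb)
    filter_upwards [Filter.preimage_mem_comap this] with w hw
    simp only [Set.mem_preimage, Set.mem_Ioi] at hw
    exact hmono (le_of_lt (by exact_mod_cast hw))
  rcases lt_or_eq_of_le (hle x hx hxb) with h | h
  · exact h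
  exfalso
  obtain ⟨c, hc1, hc2⟩ := EReal.exists_between_coe_real hxb
  have hc1' : x < c := by exact_mod_cast hc1
  have hder := (hd x hx hxb).1
  have hfx := (hd x hx hxb).2
  have hslope : Tendsto (fun y => (F y - F x) / (y - x)) (nhdsWithin x (Set.Ioi x)) (nhds (f x)) := by
    have := hder.hasDerivWithinAt (s := Set.Ioi x)
    rw [hasDerivWithinAt_iff_tendsto_slope] at this
    simpa [slope_fun_def_field, div_eq_inv_mul] using this.mono_left
      (nhdsWithin_mono _ (by simp [Set.diff_subset_iff, Set.subset_union_of_subset_right]))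
  have hev : ∀ᶠ y in nhdsWithin x (Set.Ioi x), 0 < (F y - F x) / (y - x) :=
    hslope.eventually (eventually_gt_nhds hfx)
  have hev2 : ∀ᶠ y in nhdsWithin x (Set.Ioi x), y < c :=
    eventually_nhdsWithin_of_eventually_nhds (eventually_lt_nhds hc1')
  obtain ⟨y, hy0, hyc, hyx⟩ := (hev.and (hev2.and self_mem_nhdsWithin)).exists
  have hyx' : x < y := hyx
  have : 0 < F y - F x := by
    have := mul_pos hy0 (sub_pos.mpr hyx')
    rwa [div_mul_cancel₀] at this
    exact (sub_pos.mpr hyx').ne'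
  have hFy : 1 < F y := by rw [h] at this; linarith
  have : F y ≤ 1 := hle y (le_trans hx hyx'.le) (lt_trans (by exact_mod_cast hyc) hc2)
  linarith

theorem stmt5 (F f : ℝ → ℝ) (a : ℝ) (b : EReal)
    (hF : IsCDF F f a b)
    (hmhr : MonotoneOn (fun v => f v / (1 - F v)) {x : ℝ | a ≤ x ∧ (x : EReal) < b})
    (v : ℝ) (hv : a ≤ v) (hvb : (v : EReal) < b)
    (hphi : a ≤ v - (1 - F v) / f v) :
    1 - F (v - (1 - F v) / f v) ≤ Real.exp 1 * (1 - F v) := by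
  obtain ⟨hab, hmono, hFa, hd, htend⟩ := hF
  have hfv : 0 < f v := (hd v hv hvb).2
  have hFv : F v < 1 := F_lt_one F f a b ⟨hab, hmono, hFa, hd, htend⟩ v hv hvb
  set φ := v - (1 - F v) / f v with hφdef
  have hφle : φ ≤ v := by
    have : 0 ≤ (1 - F v) / f v := div_nonneg (by linarith) hfv.le
    simp [hφdef]; linarith
  set h₀ := f v / (1 - F v) with hh₀
  set g : ℝ → ℝ := fun x => (1 - F x) * Real.exp (h₀ * x) with hg
  -- every x in [φ, v] is in [a, b)
  have hmem : ∀ x ∈ Set.Icc φ v, a ≤ x ∧ (x : EReal) < b := by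
    intro x hx
    exact ⟨le_trans hphi hx.1, lt_of_le_of_lt (by exact_mod_cast hx.2) hvb⟩
  have hderg : ∀ x ∈ Set.Icc φ v,
      HasDerivAt g (Real.exp (h₀ * x) * (h₀ * (1 - F x) - f x)) x := by
    intro x hx
    obtain ⟨hxa, hxb⟩ := hmem x hx
    have h1 : HasDerivAt (fun y => 1 - F y) (-f x) x := by
      simpa using ((hd x hxa hxb).1.const_sub 1)
    have h2 : HasDerivAt (fun y => Real.exp (h₀ * y)) (h₀ * Real.exp (h₀ * x)) x := by
      simpa [mul_comm] using (((hasDerivAt_id x).const_mul h₀).exp)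
    have : HasDerivAt (fun y => (1 - F y) * Real.exp (h₀ * y)) (-f x * Real.exp (h₀ * x) + (1 - F x) * (h₀ * Real.exp (h₀ * x))) x := h1.mul h2
    convert this using 1
    ring
  have hmonog : MonotoneOn g (Set.Icc φ v) := by
    refine monotoneOn_of_deriv_nonneg (convex_Icc φ v) ?_ ?_ ?_
    · intro x hx
      exact ((hderg x hx).continuousAt).continuousWithinAt
    · intro x hx
      have hx' : x ∈ Set.Icc φ v := interior_subset hx
      exact ((hderg x hx').differentiableAt).differentiableWithinAt
    · intro x hx
      have hx' : x ∈ Set.Icc φ v := interior_subset hx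
      rw [(hderg x hx').deriv]
      obtain ⟨hxa, hxb⟩ := hmem x hx'
      have hFx : F x < 1 := F_lt_one F f a b ⟨hab, hmono, hFa, hd, htend⟩ x hxa hxb
      have hmhr' : f x / (1 - F x) ≤ h₀ :=
        hmhr ⟨hxa, hxb⟩ ⟨hv, hvb⟩ hx'.2
      have : f x ≤ h₀ * (1 - F x) := by
        rw [div_le_iff₀ (by linarith)] at hmhr'
        linarith [hmhr']
      exact mul_nonneg (Real.exp_pos _).le (by linarith)
  have key : (1 - F φ) * Real.exp (h₀ * φ) ≤ (1 - F v) * Real.exp (h₀ * v) :=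
    hmonog (Set.left_mem_Icc.mpr hφle) (Set.right_mem_Icc.mpr hφle) hφle
  have hone : h₀ * v - h₀ * φ = 1 := by
    have hne : (1 : ℝ) - F v ≠ 0 := by linarith
    rw [← mul_sub, show v - φ = (1 - F v) / f v from by rw [hφdef]; ring, hh₀]
    field_simp
  have hexpφ : (0:ℝ) < Real.exp (h₀ * φ) := Real.exp_pos _
  have step : 1 - F φ ≤ (1 - F v) * Real.exp (h₀ * v) / Real.exp (h₀ * φ) := by
    rw [le_div_iff₀ hexpφ]
    exact key
  calc 1 - F φ ≤ (1 - F v) * Real.exp (h₀ * v) / Real.exp (h₀ * φ) := step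
    _ = (1 - F v) * Real.exp (h₀ * v - h₀ * φ) := by rw [Real.exp_sub]; ring
    _ = Real.exp 1 * (1 - F v) := by rw [hone]; ring
end

section
/- Let λ ∈ (0,1] and let F be a λ-regular CDF with density f on [a,b), and define the virtual value φ(v) = v − (1 − F(v))/f(v). Then for every v ∈ [a,b) with φ(v) ≥ a, we have 1 − F(v) ≥ (1 − λ)^{1/λ}·(1 − F(φ(v))). (This is the analytic content of Lemma 6: a monopolist intermediary facing a posted price p buys on behalf of a buyer with value v ≥ p with probability at least c(λ) = (1 − λ)^{1/λ}.) -/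
open MeasureTheory Filter

private lemma stmt6_Fle1 (F : ℝ → ℝ) (a : ℝ) (b : EReal) (hab : (a:EReal) < b)
    (hmono : Monotone F)
    (htend : Tendsto F (Filter.comap (fun x : ℝ => (x : EReal)) (nhdsWithin b (Set.Iio b))) (nhds 1))
    (v : ℝ) (hvb : (v : EReal) < b) : F v ≤ 1 := by
  have hne : (Filter.comap (fun x : ℝ => (x : EReal)) (nhdsWithin b (Set.Iio b))).NeBot := by
    rw [comap_neBot_iff]
    intro t ht
    obtain ⟨l', hl', hsub⟩ := (mem_nhdsLT_iff_exists_Ioo_subset' hab).1 ht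
    obtain ⟨y, hy1, hy2⟩ := EReal.exists_between_coe_real hl'
    exact ⟨y, hsub ⟨hy1, hy2⟩⟩
  have hev : ∀ᶠ x in Filter.comap (fun x : ℝ => (x : EReal)) (nhdsWithin b (Set.Iio b)),
      F v ≤ F x := by
    have hmem : Set.Ioi (v : EReal) ∈ nhdsWithin b (Set.Iio b) :=
      mem_nhdsWithin_of_mem_nhds (isOpen_Ioi.mem_nhds hvb)
    filter_upwards [preimage_mem_comap hmem] with x hx
    have hx' : (v:EReal) < (x:EReal) := hx
    exact hmono (le_of_lt (by exact_mod_cast hx'))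
  exact ge_of_tendsto htend hev

private lemma stmt6_main (lam : ℝ) (hl0 : 0 < lam) (hl1 : lam < 1)
    (F f : ℝ → ℝ) (a : ℝ) (b : EReal)
        (hderiv : ∀ x : ℝ, a ≤ x → (x : EReal) < b → HasDerivAt F (f x) x ∧ 0 < f x)
    (hreg : MonotoneOn (fun v => lam * v - (1 - F v) / f v) {x : ℝ | a ≤ x ∧ (x : EReal) < b})
    (v : ℝ) (hv : a ≤ v) (hvb : (v : EReal) < b)
    (hphi : a ≤ v - (1 - F v) / f v)
    (hFv : F v < 1) :
    1 - F v ≥ (1 - lam) ^ (1 / lam) * (1 - F (v - (1 - F v) / f v)) := by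
  have hfv : 0 < f v := (hderiv v hv hvb).2
  set d : ℝ := (1 - F v) / f v with hd_def
  have hd : 0 < d := div_pos (by linarith) hfv
  set φ : ℝ := v - d with hφ_def
  have hφv : φ < v := by simp [hφ_def]; linarith
  set D : ℝ → ℝ := fun u => d - lam * (v - u) with hD_def
  set H : ℝ → ℝ := fun u => (1 - F u) * (D u) ^ (1 / lam) with hH_def
  -- facts for every u in Icc φ v
  have hmem : ∀ u ∈ Set.Icc φ v, a ≤ u ∧ (u : EReal) < b := fun u hu =>
    ⟨le_trans hphi hu.1, lt_of_le_of_lt (EReal.coe_le_coe_iff.2 hu.2) hvb⟩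
  have hDpos : ∀ u ∈ Set.Icc φ v, 0 < D u := by
    intro u hu
    have h1 : v - u ≤ d := by have := hu.1; simp only [hφ_def] at this; linarith
    have h2 : lam * (v - u) ≤ lam * d := mul_le_mul_of_nonneg_left h1 hl0.le
    simp only [hD_def]
    nlinarith
  have hkey : ∀ u ∈ Set.Icc φ v, f u * D u ≤ 1 - F u := by
    intro u hu
    have hfu : 0 < f u := (hderiv u (hmem u hu).1 (hmem u hu).2).2
    have := hreg (hmem u hu) ⟨hv, hvb⟩ hu.2
    simp only [← hd_def] at this
    -- this : lam * u - (1 - F u) / f u ≤ lam * v - d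
    have h2 : D u ≤ (1 - F u) / f u := by simp only [hD_def]; linarith
    calc f u * D u ≤ f u * ((1 - F u) / f u) := mul_le_mul_of_nonneg_left h2 hfu.le
      _ = 1 - F u := by field_simp
  have hHd : ∀ u ∈ Set.Icc φ v,
      HasDerivAt H ((D u) ^ (1 / lam - 1) * ((1 - F u) - f u * D u)) u := by
    intro u hu
    have hFu : HasDerivAt (fun u => 1 - F u) (-f u) u := by
      simpa using (hderiv u (hmem u hu).1 (hmem u hu).2).1.const_sub (1:ℝ)
    have hDu : HasDerivAt D lam u := by
      have hD' := (((hasDerivAt_id' u).const_sub v).const_mul lam).const_sub d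
      rw [hD_def]; exact hD'.congr_deriv (by ring)
    have hr : HasDerivAt (fun u => (D u) ^ (1 / lam))
        (lam * (1 / lam) * (D u) ^ (1 / lam - 1)) u :=
      hDu.rpow_const (Or.inl (hDpos u hu).ne')
    have := hFu.mul hr
    refine HasDerivAt.congr_deriv this ?_
    have hlam' : (1 / lam) * lam = 1 := by field_simp
    have hsplit : (D u) ^ (1 / lam) = (D u) ^ (1 / lam - 1) * D u := by
      nth_rewrite 1 [show (1:ℝ)/lam = 1/lam - 1 + 1 by ring]
      rw [Real.rpow_add (hDpos u hu), Real.rpow_one]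
    rw [hsplit]
    field_simp
    ring
  have hmonH : MonotoneOn H (Set.Icc φ v) := by
    apply monotoneOn_of_deriv_nonneg (convex_Icc φ v)
    · exact fun u hu => ((hHd u hu).differentiableAt.continuousAt).continuousWithinAt
    · intro u hu
      rw [interior_Icc] at hu
      exact ((hHd u (Set.Ioo_subset_Icc_self hu)).differentiableAt).differentiableWithinAt
    · intro u hu
      rw [interior_Icc] at hu
      have hu' := Set.Ioo_subset_Icc_self hu
      rw [(hHd u hu').deriv]
      have h1 := hDpos u hu'
      have h2 := hkey u hu'
      have h3 : (0:ℝ) ≤ (D u) ^ (1 / lam - 1) := (Real.rpow_pos_of_pos h1 _).le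
      exact mul_nonneg h3 (by linarith)
  have hHle := hmonH (Set.left_mem_Icc.2 hφv.le) (Set.right_mem_Icc.2 hφv.le) hφv.le
  have hDφ : D φ = (1 - lam) * d := by simp only [hD_def, hφ_def]; ring
  have hDv : D v = d := by simp only [hD_def]; ring
  simp only [hH_def, hDφ, hDv] at hHle
  rw [Real.mul_rpow (by linarith) hd.le] at hHle
  have hdp : 0 < d ^ (1/lam) := Real.rpow_pos_of_pos hd _
  have : (1 - lam) ^ (1 / lam) * (1 - F φ) ≤ 1 - F v := by nlinarith
  simpa [← hφ_def, ← hd_def] using this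

theorem stmt6 (lam : ℝ) (hlam : lam ∈ Set.Ioc (0:ℝ) 1)
    (F f : ℝ → ℝ) (a : ℝ) (b : EReal)
    (hF : IsCDF F f a b)
    (hreg : LambdaRegular lam F f a b)
    (v : ℝ) (hv : a ≤ v) (hvb : (v : EReal) < b)
    (hphi : a ≤ v - (1 - F v) / f v) :
    1 - F v ≥ (1 - lam) ^ (1 / lam) * (1 - F (v - (1 - F v) / f v)) := by
  obtain ⟨hab, hmono, hFa, hderiv, htend⟩ := hF
  have hFle : F v ≤ 1 := stmt6_Fle1 F a b hab hmono htend v hvb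
  rcases eq_or_lt_of_le hFle with hF1 | hFv
  · have h0 : (1 - F v) = 0 := by rw [hF1]; ring
    rw [h0, zero_div, sub_zero, h0, mul_zero]
  · rcases eq_or_lt_of_le hlam.2 with hlam1 | hlam1
    · subst hlam1
      have h1 : ((1:ℝ) - 1) ^ ((1:ℝ) / 1) = 0 := by
        norm_num [Real.rpow_one]
      rw [h1, zero_mul]
      linarith
    · exact stmt6_main lam hlam.1 hlam1 F f a b hderiv hreg v hv hvb hphi hFv
end

section
/- Let k ≥ 1 be an integer, η_1 ≥ η_2 ≥ … ≥ η_k ≥ 0 reals with η_{k+1} := 0, and u_1 ≥ u_2 ≥ … ≥ u_k ≥ 0 reals. Define r_j = ∑_{t=j}^k u_t·(η_t − η_{t+1}) for j ∈ [k]. Suppose v ≥ 0 and j ∈ [k] are such that v ≥ u_j and v < u_t for every 1 ≤ t < j (i.e., j is the least index with v ≥ u_j). Then for every j' ∈ [k], v·η_j − r_j ≥ v·η_{j'} − r_{j'}; that is, item j maximizes the surplus v·η_{j'} − r_{j'} over all items j'. (This is the key exchange inequality underlying Lemma 'buyone' for the heterogeneous-items price menu.) -/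
theorem stmt10 (k : ℕ) (hk : 1 ≤ k)
    (η : ℕ → ℝ) (hη : ∀ j, 1 ≤ j → j ≤ k → η (j + 1) ≤ η j) (hηlast : η (k + 1) = 0)
    (u : ℕ → ℝ) (hu : ∀ j, 1 ≤ j → j < k → u (j + 1) ≤ u j) (huk : 0 ≤ u k)
    (r : ℕ → ℝ) (hr : ∀ j, r j = ∑ t ∈ Finset.Icc j k, u t * (η t - η (t + 1)))
    (v : ℝ) (hv : 0 ≤ v) (j : ℕ) (hj : j ∈ Finset.Icc 1 k)
    (hvj : u j ≤ v) (hleast : ∀ t, 1 ≤ t → t < j → v < u t) :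
    ∀ j' ∈ Finset.Icc 1 k, v * η j' - r j' ≤ v * η j - r j := by
  intro j' hj'
  simp only [Finset.mem_Icc] at hj hj'
  obtain ⟨hj1, hjk⟩ := hj
  obtain ⟨hj'1, hj'k⟩ := hj'
  -- monotonicity of u
  have umono : ∀ a b : ℕ, 1 ≤ a → a ≤ b → b ≤ k → u b ≤ u a := by
    intro a b ha hab hbk
    induction b, hab using Nat.le_induction with
    | base => exact le_rfl
    | succ n hn ih =>
      have hnk : n < k := Nat.lt_of_succ_le hbk
      exact le_trans (hu n (le_trans ha hn) hnk) (ih (le_of_lt hnk))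
  have hΔ : ∀ t : ℕ, 1 ≤ t → t ≤ k → 0 ≤ η t - η (t + 1) := by
    intro t h1 h2; linarith [hη t h1 h2]
  -- splitting of r
  have rsplit : ∀ a b : ℕ, a ≤ b → b ≤ k + 1 →
      r a - r b = ∑ t ∈ Finset.Ico a b, u t * (η t - η (t + 1)) := by
    intro a b hab hbk
    rw [hr, hr, ← Finset.Ico_add_one_right_eq_Icc, ← Finset.Ico_add_one_right_eq_Icc]
    rw [← Finset.sum_Ico_consecutive (fun t => u t * (η t - η (t + 1))) hab hbk]
    ring
  -- telescoping of η
  have ηtel : ∀ a b : ℕ, a ≤ b → η a - η b = ∑ t ∈ Finset.Ico a b, (η t - η (t + 1)) := by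
    intro a b hab
    induction b, hab using Nat.le_induction with
    | base => simp
    | succ n hn ih =>
      rw [Finset.sum_Ico_succ_top hn, ← ih]; ring
  rcases le_total j j' with hle | hle
  · -- j ≤ j' : use that u t ≤ v for t ≥ j
    have e1 : r j - r j' = ∑ t ∈ Finset.Ico j j', u t * (η t - η (t + 1)) :=
      rsplit j j' hle (by omega)
    have e2 : v * η j - v * η j' = ∑ t ∈ Finset.Ico j j', v * (η t - η (t + 1)) := by
      rw [← Finset.mul_sum, ← ηtel j j' hle]; ring
    have hsum : ∑ t ∈ Finset.Ico j j', u t * (η t - η (t + 1))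
        ≤ ∑ t ∈ Finset.Ico j j', v * (η t - η (t + 1)) := by
      apply Finset.sum_le_sum
      intro t ht
      rw [Finset.mem_Ico] at ht
      have h1 : 1 ≤ t := le_trans hj1 ht.1
      have h2 : t ≤ k := by omega
      exact mul_le_mul_of_nonneg_right (le_trans (umono j t hj1 ht.1 h2) hvj) (hΔ t h1 h2)
    linarith
  · -- j' ≤ j : use that v ≤ u t for t < j
    have e1 : r j' - r j = ∑ t ∈ Finset.Ico j' j, u t * (η t - η (t + 1)) :=
      rsplit j' j hle (by omega)
    have e2 : v * η j' - v * η j = ∑ t ∈ Finset.Ico j' j, v * (η t - η (t + 1)) := by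
      rw [← Finset.mul_sum, ← ηtel j' j hle]; ring
    have hsum : ∑ t ∈ Finset.Ico j' j, v * (η t - η (t + 1))
        ≤ ∑ t ∈ Finset.Ico j' j, u t * (η t - η (t + 1)) := by
      apply Finset.sum_le_sum
      intro t ht
      rw [Finset.mem_Ico] at ht
      have h1 : 1 ≤ t := le_trans hj'1 ht.1
      have h2 : t ≤ k := by omega
      exact mul_le_mul_of_nonneg_right (hleast t h1 ht.2).le (hΔ t h1 h2)
    linarith
end

section
/- For every λ ∈ [0,1], every integer n ≥ 1, and every real x ∈ [0,1): (1 + λ)·n·x^n/(1 − x^n) + (n − 1) ≥ (1 + λ)·x/(1 − x). -/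
open Finset in
lemma aux_pow_sum (x : ℝ) (hx0 : 0 ≤ x) (hx1 : x ≤ 1) (n : ℕ) :
    (n : ℝ) * x ^ n ≤ x * ∑ j ∈ Finset.range n, x ^ j := by
  rw [Finset.mul_sum]
  calc (n : ℝ) * x ^ n = ∑ _j ∈ Finset.range n, x ^ n := by
        rw [Finset.sum_const, Finset.card_range, nsmul_eq_mul]
    _ ≤ ∑ j ∈ Finset.range n, x * x ^ j := by
        apply Finset.sum_le_sum
        intro j hj
        rw [← pow_succ']
        exact pow_le_pow_of_le_one hx0 hx1 (Finset.mem_range.1 hj)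

open Finset in
lemma aux_G (x : ℝ) (hx0 : 0 ≤ x) (hx1 : x ≤ 1) (n : ℕ) :
    2 * ∑ j ∈ Finset.range n, x ^ j ≤ ((n : ℝ) + 1) + ((n : ℝ) - 1) * x ^ n := by
  induction n with
  | zero => simp
  | succ n ih =>
    have hsum : ((n : ℝ) + 1) * x ^ n ≤ ∑ j ∈ Finset.range (n + 1), x ^ j := by
      calc ((n : ℝ) + 1) * x ^ n = ∑ _j ∈ Finset.range (n + 1), x ^ n := by
            rw [Finset.sum_const, Finset.card_range, nsmul_eq_mul]; push_cast; ring
        _ ≤ ∑ j ∈ Finset.range (n + 1), x ^ j := by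
            apply Finset.sum_le_sum
            intro j hj
            exact pow_le_pow_of_le_one hx0 hx1 (Nat.lt_succ_iff.1 (Finset.mem_range.1 hj))
    have hgeom : (1 - x) * ∑ j ∈ Finset.range (n + 1), x ^ j = 1 - x ^ (n + 1) := by
      have := geom_sum_mul x (n + 1)
      linarith [this]
    -- key: (n+1) x^n - n x^(n+1) ≤ 1
    have hkey : ((n : ℝ) + 1) * x ^ n - (n : ℝ) * x ^ (n + 1) ≤ 1 := by
      nlinarith [mul_le_mul_of_nonneg_left hsum (by linarith : (0:ℝ) ≤ 1 - x), pow_succ x n, hgeom]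
    rw [Finset.sum_range_succ]
    push_cast
    nlinarith [ih, pow_succ x n, pow_nonneg hx0 n]

theorem stmt11 (lam : ℝ) (hlam : lam ∈ Set.Icc (0:ℝ) 1) (n : ℕ) (hn : 1 ≤ n)
    (x : ℝ) (hx : x ∈ Set.Ico (0:ℝ) 1) :
    (1 + lam) * ((n : ℝ) * x ^ n / (1 - x ^ n)) + ((n : ℝ) - 1) ≥
      (1 + lam) * (x / (1 - x)) := by
  obtain ⟨hx0, hx1⟩ := hx
  obtain ⟨hl0, hl1⟩ := hlam
  set S : ℝ := ∑ j ∈ Finset.range n, x ^ j with hSdef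
  have hS : (1 - x) * S = 1 - x ^ n := by
    have := geom_sum_mul x n
    rw [hSdef]; linarith [this]
  have hA : (0:ℝ) < 1 - x := by linarith
  have hB : (0:ℝ) < 1 - x ^ n := by
    have : x ^ n < 1 := pow_lt_one₀ hx0 hx1 (by omega)
    linarith
  have hSpos : 0 < S := by
    by_contra h
    push_neg at h
    nlinarith
  have hA2 : (n : ℝ) * x ^ n ≤ x * S := aux_pow_sum x hx0 hx1.le n
  have hG : 2 * S ≤ ((n : ℝ) + 1) + ((n : ℝ) - 1) * x ^ n := aux_G x hx0 hx1.le n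
  have key : (1 + lam) * (x * S) ≤ (1 + lam) * ((n : ℝ) * x ^ n) + ((n : ℝ) - 1) * (1 - x ^ n) := by
    have hxS : x * S = S - 1 + x ^ n := by nlinarith [hS]
    nlinarith [mul_nonneg (by linarith : (0:ℝ) ≤ 1 - lam) (by linarith : (0:ℝ) ≤ x * S - (n : ℝ) * x ^ n)]
  have h1 : x / (1 - x) = x * S / (1 - x ^ n) := by
    rw [eq_div_iff hB.ne', ← hS]
    field_simp
  rw [ge_iff_le, h1, mul_div_assoc']
  rw [div_le_iff₀ hB]
  have hrhs : ((1 + lam) * ((n : ℝ) * x ^ n / (1 - x ^ n)) + ((n : ℝ) - 1)) * (1 - x ^ n)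
      = (1 + lam) * ((n : ℝ) * x ^ n) + ((n : ℝ) - 1) * (1 - x ^ n) := by
    field_simp
  rw [hrhs]
  exact key
end

section
/- For every integer n ≥ 1, the function h(x) = n·x^n/(1 − x^n) − x/(1 − x) is nonincreasing on [0,1), and h(x) ≥ −(n − 1)/2 for every x ∈ [0,1). -/
open Finset

private lemma telA' (x : ℝ) (n : ℕ) :
    (1 - x) * ∑ j ∈ range n, (j:ℝ) * x^j
      = (∑ j ∈ range n, x^j) - 1 - ((n:ℝ) - 1) * x^n := by
  induction n with
  | zero => simp
  | succ m ih =>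
    rw [Finset.sum_range_succ, Finset.sum_range_succ]
    push_cast
    linear_combination ih

private lemma telB' (x : ℝ) (n : ℕ) : (1 - x) * ∑ j ∈ range n, x^j = 1 - x^n := by
  linear_combination - geom_sum_mul x n

private lemma Bpos' (n : ℕ) (hn : 1 ≤ n) (x : ℝ) (h0 : 0 ≤ x) :
    (0:ℝ) < ∑ j ∈ range n, x^j := by
  have h := Finset.single_le_sum (f := fun j => x^j)
    (fun i _ => pow_nonneg h0 i) (Finset.mem_range.2 hn)
  simpa using lt_of_lt_of_le one_pos (by simpa using h)

private lemma ident' (n : ℕ) (hn : 1 ≤ n) (x : ℝ) (hx : x ∈ Set.Ico (0:ℝ) 1) :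
    (n : ℝ) * x ^ n / (1 - x ^ n) - x / (1 - x)
      = -(∑ j ∈ range n, (j:ℝ) * x^j) / (∑ j ∈ range n, x^j) := by
  obtain ⟨h0, h1⟩ := hx
  set A := ∑ j ∈ range n, (j:ℝ) * x^j with hAdef
  set B := ∑ j ∈ range n, x^j with hBdef
  have hA : (1 - x) * A = B - 1 - ((n:ℝ) - 1) * x^n := telA' x n
  have hBe : (1 - x) * B = 1 - x^n := telB' x n
  have hx1 : (0:ℝ) < 1 - x := by linarith
  have hB : (0:ℝ) < B := Bpos' n hn x h0
  have key : (n:ℝ)*x^n - x*B = -((1-x)*A) := by linear_combination hA + hBe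
  rw [← hBe]
  field_simp
  linear_combination key

private lemma auxpow' (x y : ℝ) (hx : 0 ≤ x) (hxy : x ≤ y) {i j : ℕ} (hij : i ≤ j) :
    x^j * y^i ≤ x^i * y^j := by
  obtain ⟨d, rfl⟩ := Nat.exists_eq_add_of_le hij
  have hy : 0 ≤ y := hx.trans hxy
  have h1 : x^d ≤ y^d := pow_le_pow_left₀ hx hxy d
  have h2 : 0 ≤ x^i * y^i := mul_nonneg (pow_nonneg hx i) (pow_nonneg hy i)
  calc x^(i+d) * y^i = (x^i * y^i) * x^d := by ring
    _ ≤ (x^i * y^i) * y^d := by nlinarith [pow_nonneg hx d]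
    _ = x^i * y^(i+d) := by ring

private lemma cross' (n : ℕ) (x y : ℝ) (hx : 0 ≤ x) (hxy : x ≤ y) :
    (∑ j ∈ range n, (j:ℝ) * x^j) * (∑ j ∈ range n, y^j)
      ≤ (∑ j ∈ range n, (j:ℝ) * y^j) * (∑ j ∈ range n, x^j) := by
  rw [Finset.sum_mul_sum, Finset.sum_mul_sum]
  have hswap : ∑ i ∈ range n, ∑ j ∈ range n, (j:ℝ) * y^j * x^i
      = ∑ i ∈ range n, ∑ j ∈ range n, (i:ℝ) * y^i * x^j := by rw [Finset.sum_comm]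
  have hswap2 : ∑ i ∈ range n, ∑ j ∈ range n, (j:ℝ) * x^j * y^i
      = ∑ i ∈ range n, ∑ j ∈ range n, (i:ℝ) * x^i * y^j := by rw [Finset.sum_comm]
  have hsum : (0:ℝ) ≤ ∑ i ∈ range n, ∑ j ∈ range n,
      (((i:ℝ) * y^i * x^j - (i:ℝ) * x^i * y^j) + ((j:ℝ) * y^j * x^i - (j:ℝ) * x^j * y^i)) := by
    apply Finset.sum_nonneg; intro i _
    apply Finset.sum_nonneg; intro j _
    rcases le_total i j with h | h
    · have h1 := auxpow' x y hx hxy h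
      have h2 : (i:ℝ) ≤ (j:ℝ) := by exact_mod_cast h
      nlinarith
    · have h1 := auxpow' x y hx hxy h
      have h2 : (j:ℝ) ≤ (i:ℝ) := by exact_mod_cast h
      nlinarith
  have expand : ∑ i ∈ range n, ∑ j ∈ range n,
      (((i:ℝ) * y^i * x^j - (i:ℝ) * x^i * y^j) + ((j:ℝ) * y^j * x^i - (j:ℝ) * x^j * y^i))
      = (∑ i ∈ range n, ∑ j ∈ range n, (i:ℝ) * y^i * x^j)
        - (∑ i ∈ range n, ∑ j ∈ range n, (i:ℝ) * x^i * y^j)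
        + ((∑ i ∈ range n, ∑ j ∈ range n, (j:ℝ) * y^j * x^i)
        - (∑ i ∈ range n, ∑ j ∈ range n, (j:ℝ) * x^j * y^i)) := by
    simp [Finset.sum_add_distrib, Finset.sum_sub_distrib]
  rw [expand, hswap, hswap2] at hsum
  linarith

private lemma bound' (n : ℕ) (hn : 1 ≤ n) (x : ℝ) (h0 : 0 ≤ x) (h1 : x ≤ 1) :
    2 * ∑ j ∈ range n, (j:ℝ) * x^j ≤ ((n:ℝ) - 1) * ∑ j ∈ range n, x^j := by
  have key : (0:ℝ) ≤ ∑ j ∈ range n, (((n:ℝ) - 1 - 2*j) * x^j) := by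
    have refl := Finset.sum_range_reflect (fun j => ((n:ℝ) - 1 - 2*j) * x^j) n
    have h2 : (2:ℝ) * ∑ j ∈ range n, (((n:ℝ) - 1 - 2*j) * x^j)
        = ∑ j ∈ range n, ((((n:ℝ) - 1 - 2*j) * x^j)
            + (((n:ℝ) - 1 - 2*((n - 1 - j : ℕ):ℝ)) * x^(n - 1 - j))) := by
      rw [Finset.sum_add_distrib, refl]; ring
    have h3 : (0:ℝ) ≤ ∑ j ∈ range n, ((((n:ℝ) - 1 - 2*j) * x^j)
            + (((n:ℝ) - 1 - 2*((n - 1 - j : ℕ):ℝ)) * x^(n - 1 - j))) := by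
      apply Finset.sum_nonneg; intro j hj
      have hjn : j < n := Finset.mem_range.1 hj
      have hk : ((n - 1 - j : ℕ):ℝ) = (n:ℝ) - 1 - j := by
        have : n - 1 - j = n - (1 + j) := by omega
        rw [this, Nat.cast_sub (by omega)]
        push_cast; ring
      rw [hk]
      rcases le_total j (n - 1 - j) with h | h
      · have hp : x^(n-1-j) ≤ x^j := pow_le_pow_of_le_one h0 h1 h
        have hc : (2*j + 1 : ℕ) ≤ n := by omega
        have hc' : (2*(j:ℝ) + 1) ≤ (n:ℝ) := by exact_mod_cast hc
        nlinarith
      · have hp : x^j ≤ x^(n-1-j) := pow_le_pow_of_le_one h0 h1 h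
        have hc : (n:ℕ) ≤ 2*j + 1 := by omega
        have hc' : (n:ℝ) ≤ 2*(j:ℝ) + 1 := by exact_mod_cast hc
        nlinarith
    linarith
  have expand : ∑ j ∈ range n, (((n:ℝ) - 1 - 2*j) * x^j)
      = ((n:ℝ) - 1) * (∑ j ∈ range n, x^j) - 2 * ∑ j ∈ range n, (j:ℝ) * x^j := by
    rw [Finset.mul_sum, Finset.mul_sum, ← Finset.sum_sub_distrib]
    apply Finset.sum_congr rfl; intros; ring
  linarith

theorem stmt12 (n : ℕ) (hn : 1 ≤ n) :
    AntitoneOn (fun x : ℝ => (n : ℝ) * x ^ n / (1 - x ^ n) - x / (1 - x))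
      (Set.Ico (0:ℝ) 1) ∧
    ∀ x ∈ Set.Ico (0:ℝ) 1,
      (n : ℝ) * x ^ n / (1 - x ^ n) - x / (1 - x) ≥ -(((n : ℝ) - 1) / 2) := by
  constructor
  · intro x hx y hy hxy
    simp only
    rw [ident' n hn x hx, ident' n hn y hy]
    have hBx : (0:ℝ) < ∑ j ∈ range n, x^j := Bpos' n hn x hx.1
    have hBy : (0:ℝ) < ∑ j ∈ range n, y^j := Bpos' n hn y hy.1
    rw [div_le_div_iff₀ hBy hBx]
    have := cross' n x y hx.1 hxy
    nlinarith
  · intro x hx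
    rw [ident' n hn x hx, ge_iff_le, neg_div, neg_le_neg_iff]
    have hBx : (0:ℝ) < ∑ j ∈ range n, x^j := Bpos' n hn x hx.1
    rw [div_le_div_iff₀ hBx (by norm_num : (0:ℝ) < 2)]
    have := bound' n hn x hx.1 (le_of_lt hx.2)
    nlinarith
end

section
/- Let λ ∈ (0,1], n ≥ 1 an integer, I ⊆ ℝ an interval, and F : ℝ → ℝ nondecreasing and continuous with 0 ≤ F(x) < 1 for all x ∈ I. If the function x ↦ (1 − F(x))^{−λ} is convex on I, then the function x ↦ (1 − F(x)^n)^{−λ} is convex on I. -/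
open Real Set Finset

lemma key_poly (n : ℕ) {u : ℝ} (hu0 : 0 ≤ u) (hu1 : u ≤ 1) :
    0 ≤ ∑ k ∈ Finset.range n, ((n : ℝ) - 1 - 2 * k) * u ^ k := by
  set f : ℕ → ℝ := fun j => ((n : ℝ) - 1 - 2 * j) * u ^ j with hf
  have hterm : ∀ k ∈ Finset.range n, 0 ≤ f k + f (n - 1 - k) := by
    intro k hk
    rw [Finset.mem_range] at hk
    have h1 : 1 ≤ n := by omega
    have h2 : k ≤ n - 1 := by omega
    have hcast : ((n - 1 - k : ℕ) : ℝ) = (n : ℝ) - 1 - k := by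
      rw [Nat.cast_sub h2, Nat.cast_sub h1]; push_cast; ring
    have hexpand : f k + f (n - 1 - k)
        = ((n : ℝ) - 1 - 2 * k) * (u ^ k - u ^ (n - 1 - k)) := by
      rw [hf]; simp only []; rw [hcast]; ring
    rw [hexpand]
    rcases le_total (2 * k) (n - 1) with hc | hc
    · have hcle : (2 * k + 1 : ℝ) ≤ n := by exact_mod_cast (by omega : 2 * k + 1 ≤ n)
      have hpow : u ^ (n - 1 - k) ≤ u ^ k :=
        pow_le_pow_of_le_one hu0 hu1 (by omega)
      exact mul_nonneg (by linarith) (by linarith)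
    · have hcle : (n : ℝ) ≤ 2 * k + 1 := by exact_mod_cast (by omega : n ≤ 2 * k + 1)
      have hpow : u ^ k ≤ u ^ (n - 1 - k) :=
        pow_le_pow_of_le_one hu0 hu1 (by omega)
      nlinarith [hpow]
  have hrefl : ∑ k ∈ Finset.range n, f (n - 1 - k) = ∑ k ∈ Finset.range n, f k :=
    Finset.sum_range_reflect f n
  have hsum : 0 ≤ ∑ k ∈ Finset.range n, (f k + f (n - 1 - k)) := Finset.sum_nonneg hterm
  rw [Finset.sum_add_distrib, hrefl] at hsum
  linarith

noncomputable def Sgeom (n : ℕ) (u : ℝ) : ℝ := ∑ k ∈ Finset.range n, u ^ k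
noncomputable def Sgeom' (n : ℕ) (u : ℝ) : ℝ := ∑ k ∈ Finset.range n, (k : ℝ) * u ^ (k - 1)

lemma Sgeom_def (n : ℕ) (u : ℝ) : Sgeom n u = ∑ k ∈ Finset.range n, u ^ k := rfl

lemma Sgeom_ge_one {n : ℕ} (hn : 1 ≤ n) {u : ℝ} (hu0 : 0 ≤ u) : 1 ≤ Sgeom n u := by
  have h0 : (0 : ℕ) ∈ Finset.range n := Finset.mem_range.2 (by omega)
  have := Finset.single_le_sum (f := fun k => u ^ k)
    (fun k _ => pow_nonneg hu0 k) h0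
  simpa [Sgeom] using this

lemma Sgeom_continuous (n : ℕ) : Continuous (Sgeom n) := by
  unfold Sgeom
  exact continuous_finset_sum _ fun k _ => continuous_pow k

lemma hasDerivAt_Sgeom (n : ℕ) (u : ℝ) : HasDerivAt (Sgeom n) (Sgeom' n u) u := by
  unfold Sgeom Sgeom'
  exact HasDerivAt.fun_sum fun k _ => hasDerivAt_pow k u

lemma mul_Sgeom' (n : ℕ) (u : ℝ) :
    u * Sgeom' n u = ∑ k ∈ Finset.range n, (k : ℝ) * u ^ k := by
  unfold Sgeom'
  rw [Finset.mul_sum]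
  refine Finset.sum_congr rfl fun k _ => ?_
  rcases k with _ | k
  · simp
  · simp only [Nat.succ_sub_one]
    rw [pow_succ]; push_cast; ring

lemma bracket_nonneg {lam : ℝ} (hlam : lam ∈ Set.Ioc (0:ℝ) 1) (n : ℕ)
    {u : ℝ} (hu0 : 0 ≤ u) (hu1 : u ≤ 1) :
    (lam + 1) * (u * Sgeom' n u) ≤ ((n : ℝ) - 1) * Sgeom n u := by
  have hS' : 0 ≤ u * Sgeom' n u := by
    rw [mul_Sgeom']
    exact Finset.sum_nonneg fun k _ => mul_nonneg (by positivity) (pow_nonneg hu0 k)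
  have h2 : (lam + 1) * (u * Sgeom' n u) ≤ 2 * (u * Sgeom' n u) := by nlinarith [hlam.2]
  refine h2.trans ?_
  have hkey := key_poly n hu0 hu1
  have hexp : ((n : ℝ) - 1) * Sgeom n u - 2 * (u * Sgeom' n u)
      = ∑ k ∈ Finset.range n, ((n : ℝ) - 1 - 2 * k) * u ^ k := by
    rw [mul_Sgeom', Sgeom, Finset.mul_sum, Finset.mul_sum, ← Finset.sum_sub_distrib]
    exact Finset.sum_congr rfl fun k _ => by ring
  linarith

noncomputable def rho (lam : ℝ) (n : ℕ) (u : ℝ) : ℝ :=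
  (n : ℝ) * u ^ (n - 1) * (Sgeom n u) ^ (-(lam + 1))

lemma rho_def (lam : ℝ) (n : ℕ) (u : ℝ) :
    rho lam n u = (n : ℝ) * u ^ (n - 1) * (Sgeom n u) ^ (-(lam + 1)) := rfl

lemma hasDerivAt_rho {lam : ℝ} (n : ℕ) (hn2 : 2 ≤ n) {u : ℝ} (hu0 : 0 ≤ u) :
    HasDerivAt (rho lam n)
      ((n : ℝ) * u ^ (n - 2) * (Sgeom n u) ^ (-(lam + 2)) *
        (((n : ℝ) - 1) * Sgeom n u - (lam + 1) * (u * Sgeom' n u))) u := by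
  have hSpos : 0 < Sgeom n u := lt_of_lt_of_le one_pos (Sgeom_ge_one (by omega) hu0)
  have hS := hasDerivAt_Sgeom n u
  have hrpow : HasDerivAt (fun v => (Sgeom n v) ^ (-(lam + 1)))
      (Sgeom' n u * (-(lam + 1)) * Sgeom n u ^ (-(lam + 1) - 1)) u :=
    hS.rpow_const (Or.inl (ne_of_gt hSpos))
  have hpow : HasDerivAt (fun v : ℝ => v ^ (n - 1)) (((n - 1 : ℕ) : ℝ) * u ^ (n - 1 - 1)) u :=
    hasDerivAt_pow (n - 1) u
  have hmul := (hpow.mul hrpow).const_mul (n : ℝ)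
  have hfun : rho lam n = fun y => (n : ℝ) * (y ^ (n - 1) * Sgeom n y ^ (-(lam + 1))) := by
    funext y; rw [rho]; ring
  rw [hfun]
  convert (show HasDerivAt (fun y => (n : ℝ) * (y ^ (n - 1) * Sgeom n y ^ (-(lam + 1)))) _ u from hmul) using 1
  have hcast : ((n - 1 : ℕ) : ℝ) = (n : ℝ) - 1 := by
    rw [Nat.cast_sub (by omega)]; norm_num
  have he1 : n - 1 - 1 = n - 2 := by omega
  have he2 : Sgeom n u ^ (-(lam + 1)) = Sgeom n u ^ (-(lam + 2)) * Sgeom n u := by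
    rw [show -(lam + 1) = (-(lam + 2)) + 1 by ring, Real.rpow_add hSpos, Real.rpow_one]
  have he3 : Sgeom n u ^ (-(lam + 1) - 1) = Sgeom n u ^ (-(lam + 2)) := by
    congr 1; ring
  have he4 : u ^ (n - 1) = u ^ (n - 2) * u := by
    rw [show n - 1 = (n - 2) + 1 by omega, pow_succ]
  rw [hcast, he1, he2, he3, he4]
  ring

lemma rho_mono {lam : ℝ} (hlam : lam ∈ Set.Ioc (0:ℝ) 1) {n : ℕ} (hn2 : 2 ≤ n) :
    MonotoneOn (rho lam n) (Set.Icc (0:ℝ) 1) := by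
  have hScont := Sgeom_continuous n
  apply monotoneOn_of_deriv_nonneg (convex_Icc 0 1)
  · exact ((continuous_const.mul (continuous_pow (n-1))).continuousOn.mul
      (hScont.continuousOn.rpow_const fun x hx =>
        Or.inl (ne_of_gt (lt_of_lt_of_le one_pos (Sgeom_ge_one (by omega) hx.1)))))
  · rw [interior_Icc]
    intro u hu
    exact (hasDerivAt_rho n hn2 hu.1.le).differentiableAt.differentiableWithinAt
  · rw [interior_Icc]
    intro u hu
    rw [(hasDerivAt_rho n hn2 hu.1.le).deriv]
    have hb := bracket_nonneg hlam n hu.1.le hu.2.le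
    have hSpos : (0:ℝ) < Sgeom n u := lt_of_lt_of_le one_pos (Sgeom_ge_one (by omega) hu.1.le)
    have h1 : (0:ℝ) ≤ (n : ℝ) * u ^ (n - 2) * Sgeom n u ^ (-(lam + 2)) :=
      mul_nonneg (mul_nonneg (by positivity) (pow_nonneg hu.1.le _)) (Real.rpow_nonneg hSpos.le _)
    nlinarith [h1, sub_nonneg.2 hb]

noncomputable def sig (lam : ℝ) (t : ℝ) : ℝ := 1 - t ^ (-(1/lam))
noncomputable def psi (lam : ℝ) (n : ℕ) (t : ℝ) : ℝ := (1 - (sig lam t) ^ n) ^ (-lam)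

lemma sig_mem {lam : ℝ} (hl : 0 < lam) {t : ℝ} (ht : 1 ≤ t) : sig lam t ∈ Set.Ico (0:ℝ) 1 := by
  have ht0 : (0:ℝ) < t := by linarith
  have h1 : 0 < t ^ (-(1/lam)) := Real.rpow_pos_of_pos ht0 _
  have h2 : t ^ (-(1/lam)) ≤ 1 :=
    Real.rpow_le_one_of_one_le_of_nonpos ht (by rw [neg_nonpos]; positivity)
  exact ⟨by rw [sig]; linarith, by rw [sig]; linarith⟩

lemma sig_monoOn {lam : ℝ} (hl : 0 < lam) : MonotoneOn (sig lam) (Set.Ici (1:ℝ)) := by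
  intro a ha b hb hab
  have h : b ^ (-(1/lam)) ≤ a ^ (-(1/lam)) :=
    Real.rpow_le_rpow_of_nonpos (by linarith [mem_Ici.1 ha]) hab
      (by rw [neg_nonpos]; positivity)
  rw [sig, sig]
  linarith

lemma hasDerivAt_psi {lam : ℝ} (hl : 0 < lam) (n : ℕ) (hn : 1 ≤ n) {t : ℝ} (ht : 1 ≤ t) :
    HasDerivAt (psi lam n)
      ((n : ℝ) * sig lam t ^ (n - 1) * (1 - sig lam t ^ n) ^ (-lam - 1) * t ^ (-(1/lam) - 1)) t := by
  have ht0 : (0:ℝ) < t := by linarith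
  have hu := sig_mem hl ht
  have hvpos : 0 < 1 - sig lam t ^ n := by
    have : sig lam t ^ n < 1 := pow_lt_one₀ hu.1 hu.2 (by omega)
    linarith
  have h1 : HasDerivAt (fun x : ℝ => x ^ (-(1/lam))) (-(1/lam) * t ^ (-(1/lam) - 1)) t :=
    Real.hasDerivAt_rpow_const (Or.inl (ne_of_gt ht0))
  have h2 : HasDerivAt (sig lam) (0 - -(1/lam) * t ^ (-(1/lam) - 1)) t :=
    (hasDerivAt_const t (1:ℝ)).sub h1
  have h3 := h2.pow n
  have h4 := (hasDerivAt_const t (1:ℝ)).sub h3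
  have h5 := h4.rpow_const (p := -lam) (Or.inl (ne_of_gt hvpos))
  have hfun : psi lam n = fun x => (1 - sig lam x ^ n) ^ (-lam) := rfl
  rw [hfun]
  convert (show HasDerivAt (fun x => (1 - sig lam x ^ n) ^ (-lam))
    ((0 - ↑n * sig lam t ^ (n - 1) * (0 - -(1 / lam) * t ^ (-(1 / lam) - 1))) * -lam *
      (1 - sig lam t ^ n) ^ (-lam - 1)) t from h5) using 1
  have hlne : lam ≠ 0 := ne_of_gt hl
  field_simp
  ring

lemma Dpsi_eq {lam : ℝ} (hl : 0 < lam) (n : ℕ) (hn : 1 ≤ n) {t : ℝ} (ht : 1 ≤ t) :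
    (n : ℝ) * sig lam t ^ (n - 1) * (1 - sig lam t ^ n) ^ (-lam - 1) * t ^ (-(1/lam) - 1)
      = rho lam n (sig lam t) := by
  have ht0 : (0:ℝ) < t := by linarith
  have hu := sig_mem hl ht
  set u := sig lam t with hudef
  have h1mu : t ^ (-(1/lam)) = 1 - u := by rw [hudef, sig]; ring
  have h1mupos : (0:ℝ) < 1 - u := by
    rw [← h1mu]; exact Real.rpow_pos_of_pos ht0 _
  have hSpos : (0:ℝ) < Sgeom n u := lt_of_lt_of_le one_pos (Sgeom_ge_one hn hu.1)
  have hfact : 1 - u ^ n = (1 - u) * Sgeom n u := by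
    rw [Sgeom_def]; linear_combination geom_sum_mul u n
  have hlne : lam ≠ 0 := ne_of_gt hl
  have step1 : t ^ (-(1/lam) - 1) = (1 - u) ^ (lam + 1) := by
    rw [← h1mu, ← Real.rpow_mul ht0.le]
    congr 1
    field_simp
    ring
  have step2 : (1 - u ^ n) ^ (-lam - 1) = (1 - u) ^ (-lam - 1) * Sgeom n u ^ (-lam - 1) := by
    rw [hfact, Real.mul_rpow h1mupos.le hSpos.le]
  have step3 : (1 - u) ^ (-lam - 1) * (1 - u) ^ (lam + 1) = 1 := by
    rw [← Real.rpow_add h1mupos]; norm_num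
  rw [rho_def, step1, step2, show -(lam + 1) = -lam - 1 by ring]
  linear_combination ((n:ℝ) * u ^ (n-1) * Sgeom n u ^ (-lam - 1)) * step3

section PsiProps
variable {lam : ℝ} {n : ℕ}

lemma psi_contOn (hl : 0 < lam) (hn : 1 ≤ n) : ContinuousOn (psi lam n) (Set.Ici 1) :=
  fun _ ht => (hasDerivAt_psi hl n hn ht).continuousAt.continuousWithinAt

lemma psi_diffOn (hl : 0 < lam) (hn : 1 ≤ n) :
    DifferentiableOn ℝ (psi lam n) (interior (Set.Ici (1:ℝ))) := by
  rw [interior_Ici]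
  exact fun t ht =>
    (hasDerivAt_psi hl n hn (le_of_lt ht)).differentiableAt.differentiableWithinAt

lemma psi_deriv (hl : 0 < lam) (hn : 1 ≤ n) {t : ℝ} (ht : 1 ≤ t) :
    deriv (psi lam n) t = rho lam n (sig lam t) := by
  rw [(hasDerivAt_psi hl n hn ht).deriv, Dpsi_eq hl n hn ht]

lemma psi_convexOn (hlam : lam ∈ Set.Ioc (0:ℝ) 1) (hn2 : 2 ≤ n) :
    ConvexOn ℝ (Set.Ici 1) (psi lam n) := by
  have hl := hlam.1
  have hn : 1 ≤ n := by omega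
  apply MonotoneOn.convexOn_of_deriv (convex_Ici 1) (psi_contOn hl hn) (psi_diffOn hl hn)
  rw [interior_Ici]
  intro a ha b hb hab
  have ha1 : (1:ℝ) ≤ a := le_of_lt ha
  have hb1 : (1:ℝ) ≤ b := le_of_lt hb
  rw [psi_deriv hl hn ha1, psi_deriv hl hn hb1]
  exact rho_mono hlam hn2 (Ico_subset_Icc_self (sig_mem hl ha1))
    (Ico_subset_Icc_self (sig_mem hl hb1)) (sig_monoOn hl ha1 hb1 hab)

lemma psi_monoOn (hlam : lam ∈ Set.Ioc (0:ℝ) 1) (hn : 1 ≤ n) :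
    MonotoneOn (psi lam n) (Set.Ici 1) := by
  have hl := hlam.1
  apply monotoneOn_of_deriv_nonneg (convex_Ici 1) (psi_contOn hl hn) (psi_diffOn hl hn)
  rw [interior_Ici]
  intro t ht
  have ht1 : (1:ℝ) ≤ t := le_of_lt ht
  rw [psi_deriv hl hn ht1, rho_def]
  have hu := sig_mem hl ht1
  have hSpos : (0:ℝ) < Sgeom n (sig lam t) := lt_of_lt_of_le one_pos (Sgeom_ge_one hn hu.1)
  exact mul_nonneg (mul_nonneg (by positivity) (pow_nonneg hu.1 _))
    (Real.rpow_nonneg hSpos.le _)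

lemma psi_comp (hl : 0 < lam) {u : ℝ} (hu0 : 0 ≤ u) (hu1 : u < 1) :
    psi lam n ((1 - u) ^ (-lam)) = (1 - u ^ n) ^ (-lam) := by
  have h1mupos : (0:ℝ) < 1 - u := by linarith
  have hlne : lam ≠ 0 := ne_of_gt hl
  have hsig : sig lam ((1 - u) ^ (-lam)) = u := by
    rw [sig, ← Real.rpow_mul h1mupos.le]
    rw [show -lam * -(1/lam) = 1 by field_simp, Real.rpow_one]
    ring
  rw [psi, hsig]

lemma one_le_g (hl : 0 < lam) {u : ℝ} (hu0 : 0 ≤ u) (hu1 : u < 1) :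
    (1:ℝ) ≤ (1 - u) ^ (-lam) :=
  Real.one_le_rpow_of_pos_of_le_one_of_nonpos (by linarith) (by linarith)
    (by rw [neg_nonpos]; positivity)

end PsiProps

theorem stmt15 (lam : ℝ) (hlam : lam ∈ Set.Ioc (0:ℝ) 1) (n : ℕ) (hn : 1 ≤ n)
    (I : Set ℝ) (hI : Convex ℝ I)
    (F : ℝ → ℝ) (hmono : Monotone F) (hcont : Continuous F)
    (hF : ∀ x ∈ I, 0 ≤ F x ∧ F x < 1)
    (hconv : ConvexOn ℝ I (fun x => (1 - F x) ^ (-lam))) :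
    ConvexOn ℝ I (fun x => (1 - F x ^ n) ^ (-lam)) := by
  rcases eq_or_lt_of_le hn with hn1 | hn2
  · simpa [← hn1] using hconv
  have hn2 : 2 ≤ n := hn2
  have hl := hlam.1
  set g : ℝ → ℝ := fun x => (1 - F x) ^ (-lam) with hg
  have hg1 : ∀ x ∈ I, (1:ℝ) ≤ g x := fun x hx => one_le_g hl (hF x hx).1 (hF x hx).2
  have hpsiconv := psi_convexOn hlam hn2
  have hpsimono := psi_monoOn hlam hn
  have hkey : ∀ x ∈ I, psi lam n (g x) = (1 - F x ^ n) ^ (-lam) := fun x hx =>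
    psi_comp hl (hF x hx).1 (hF x hx).2
  refine ⟨hI, ?_⟩
  intro x hx y hy a b ha hb hab
  have hz : a • x + b • y ∈ I := hI hx hy ha hb hab
  simp only [smul_eq_mul] at hz ⊢
  rw [← hkey x hx, ← hkey y hy, ← hkey _ hz]
  have hcomb : (1:ℝ) ≤ a * g x + b * g y := by
    nlinarith [hg1 x hx, hg1 y hy]
  have h1 : g (a • x + b • y) ≤ a * g x + b * g y := hconv.2 hx hy ha hb hab
  have h2 : psi lam n (g (a • x + b • y)) ≤ psi lam n (a * g x + b * g y) :=
    hpsimono (hg1 _ hz) hcomb h1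
  have h3 : psi lam n (a * g x + b * g y) ≤ a * psi lam n (g x) + b * psi lam n (g y) := by
    have := hpsiconv.2 (hg1 x hx) (hg1 y hy) ha hb hab
    simpa using this
  calc psi lam n (g (a • x + b • y)) ≤ psi lam n (a * g x + b * g y) := h2
    _ ≤ a * psi lam n (g x) + b * psi lam n (g y) := h3
end

section
/- Let λ ∈ (0,1] and let F be a λ-regular CDF with density f on [a,b) (with b ≤ ∞). Then there exists a sequence (F_t)_{t ≥ 0} of CDFs, each twice continuously differentiable with positive density on (a,b) and λ-regular (i.e., (1 − F_t)^{−λ} is convex on (a,b)), such that F_t → F uniformly on every compact subset of [a,b). -/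
open MeasureTheory Filter

section AuxLemmas

open Set intervalIntegral

private lemma aux_conv_diff_mono {s : Set ℝ} {f : ℝ → ℝ} (hf : ConvexOn ℝ s f)
    {x y δ : ℝ} (hδ : 0 ≤ δ) (hxy : x ≤ y) (hx : x - δ ∈ s) (hy : y ∈ s) :
    f x - f (x - δ) ≤ f y - f (y - δ) := by
  rcases eq_or_lt_of_le (by linarith : x - δ ≤ y) with h | h
  · have hδ0 : δ = 0 := by linarith
    have hxy' : x = y := by linarith
    subst hδ0; subst hxy'; simp
  · set θ : ℝ := (y - x) / (y - (x - δ)) with hθ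
    have hden : 0 < y - (x - δ) := by linarith
    have hθ0 : 0 ≤ θ := div_nonneg (by linarith) hden.le
    have hθ1 : 0 ≤ 1 - θ := by
      have : θ ≤ 1 := by rw [hθ, div_le_one hden]; linarith
      linarith
    have hsum : θ + (1 - θ) = 1 := by ring
    have hmul : θ * (y - (x - δ)) = y - x := by rw [hθ]; field_simp
    have e1 : θ * (x - δ) + (1 - θ) * y = x := by nlinarith [hmul]
    have e2 : (1 - θ) * (x - δ) + θ * y = y - δ := by nlinarith [hmul]
    have i1 := hf.2 hx hy hθ0 hθ1 hsum
    have i2 := hf.2 hx hy hθ1 hθ0 (by ring)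
    simp only [smul_eq_mul] at i1 i2
    rw [e1] at i1
    rw [e2] at i2
    linarith

private lemma aux_psi_der {c z : ℝ} (hz0 : z ≠ 0) :
    HasDerivAt (fun z : ℝ => c * z + z ^ (-c)) (c + -c * z ^ (-c - 1)) z := by
  have h1 : HasDerivAt (fun z : ℝ => c * z) (c * 1) z := (hasDerivAt_id z).const_mul c
  have h2 := Real.hasDerivAt_rpow_const (p := -c) (Or.inl hz0)
  exact (h1.add h2).congr_deriv (by ring)

private lemma aux_rpow_lip {c : ℝ} (hc : 0 < c) :
    ∀ {z w : ℝ}, 1 ≤ z → 1 ≤ w → |z ^ (-c) - w ^ (-c)| ≤ c * |z - w| := by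
  have hmono : MonotoneOn (fun z : ℝ => c * z + z ^ (-c)) (Set.Ici 1) := by
    apply monotoneOn_of_deriv_nonneg (convex_Ici 1)
    · intro z hz
      have hz0 : z ≠ 0 := by simp only [Set.mem_Ici] at hz; positivity
      exact (aux_psi_der (c := c) hz0).continuousAt.continuousWithinAt
    · intro z hz
      rw [interior_Ici] at hz
      have hz0 : z ≠ 0 := by simp only [Set.mem_Ioi] at hz; positivity
      exact (aux_psi_der (c := c) hz0).differentiableAt.differentiableWithinAt
    · intro z hz
      rw [interior_Ici] at hz
      simp only [Set.mem_Ioi] at hz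
      have hz0 : z ≠ 0 := by positivity
      rw [(aux_psi_der (c := c) hz0).deriv]
      have h1 : z ^ (-c - 1) ≤ 1 :=
        Real.rpow_le_one_of_one_le_of_nonpos hz.le (by linarith)
      have h2 : 0 < z ^ (-c - 1) := Real.rpow_pos_of_pos (by linarith) _
      nlinarith
  have key : ∀ {z w : ℝ}, 1 ≤ z → 1 ≤ w → z ≤ w → |z ^ (-c) - w ^ (-c)| ≤ c * |z - w| := by
    intro z w hz hw hzw
    have hanti : w ^ (-c) ≤ z ^ (-c) :=
      Real.rpow_le_rpow_of_nonpos (by linarith) hzw (by linarith)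
    have hm := hmono (Set.mem_Ici.2 hz) (Set.mem_Ici.2 hw) hzw
    rw [abs_of_nonneg (by linarith), abs_of_nonpos (by linarith)]
    dsimp at hm
    linarith
  intro z w hz hw
  rcases le_total z w with h | h
  · exact key hz hw h
  · rw [abs_sub_comm, abs_sub_comm z w]; exact key hw hz h

private lemma aux_smooth (a : ℝ) (b : EReal) (hab : (a : EReal) < b)
    (Htil ρ ρd ρdd : ℝ → ℝ) (e : ℝ) (he : 0 < e)
    (hHcont : ContinuousOn Htil {x : ℝ | (x : EReal) < b})
    (hHmono : MonotoneOn Htil {x : ℝ | (x : EReal) < b})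
    (hHconv : ConvexOn ℝ {x : ℝ | (x : EReal) < b} Htil)
    (hH1 : ∀ x ≤ a, Htil x = 1)
    (hρd : ∀ x : ℝ, (x : EReal) < b → HasDerivAt ρ (ρd x) x)
    (hρdd : ∀ x : ℝ, (x : EReal) < b → HasDerivAt ρd (ρdd x) x)
    (hρd1 : ∀ x : ℝ, (x : EReal) < b → 1 ≤ ρd x)
    (hρdd0 : ∀ x : ℝ, (x : EReal) < b → 0 ≤ ρdd x)
    (hρddc : ContinuousOn ρdd {x : ℝ | (x : EReal) < b}) :
    ∃ Ht : ℝ → ℝ,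
      Ht a = 1 ∧ MonotoneOn Ht {x : ℝ | (x : EReal) < b} ∧
      ContDiffOn ℝ 2 Ht {x : ℝ | (x : EReal) < b} ∧
      (∀ x : ℝ, (x : EReal) < b → ∃ d, HasDerivAt Ht d x ∧ e ≤ d) ∧
      ConvexOn ℝ {x : ℝ | (x : EReal) < b} Ht ∧
      (∀ x : ℝ, (x : EReal) < b → Htil (x - e - e) ≤ Ht x - e * (ρ x - ρ a)) ∧
      (∀ x : ℝ, (x : EReal) < b → Ht x - e * (ρ x - ρ a) ≤ Htil x) := by
  set V : Set ℝ := {x : ℝ | (x : EReal) < b} with hVdef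
  have hVmem : ∀ {x : ℝ}, x ∈ V ↔ (x : EReal) < b := Iff.rfl
  have hVopen : IsOpen V := isOpen_Iio.preimage continuous_coe_real_ereal
  have hVdc : ∀ {x y : ℝ}, y ≤ x → x ∈ V → y ∈ V := by
    intro x y hyx hx
    exact lt_of_le_of_lt (EReal.coe_le_coe_iff.2 hyx) hx
  have haV : a ∈ V := hab
  have hVconv : Convex ℝ V := by
    rw [convex_iff_ordConnected]
    exact ⟨fun x hx y hy z hz => hVdc hz.2 hy⟩
  have hsupV : ∀ {u v : ℝ}, u ∈ V → v ∈ V → max u v ∈ V := by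
    intro u v hu hv
    rcases le_total u v with h | h
    · rwa [max_eq_right h]
    · rwa [max_eq_left h]
  have huIccV : ∀ {u v : ℝ}, u ∈ V → v ∈ V → Set.uIcc u v ⊆ V := by
    intro u v hu hv w hw
    exact hVdc (hw.2.trans (le_refl _)) (hsupV hu hv)
  have hInt : ∀ {u v : ℝ}, u ∈ V → v ∈ V → IntervalIntegrable Htil volume u v :=
    fun hu hv => (hHcont.mono (huIccV hu hv)).intervalIntegrable
  -- first smoothing
  set J : ℝ → ℝ := fun x => ∫ u in a..x, Htil u with hJdef
  set A : ℝ → ℝ := fun x => J x - J (x - e) with hAdef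
  have hsub : ∀ {x : ℝ} {d : ℝ}, 0 ≤ d → x ∈ V → x - d ∈ V := by
    intro x d hd hx
    exact hVdc (by linarith) hx
  have hJder : ∀ x ∈ V, HasDerivAt J (Htil x) x := by
    intro x hx
    exact integral_hasDerivAt_right (hInt haV hx)
      (hHcont.stronglyMeasurableAtFilter hVopen x hx)
      (hHcont.continuousAt (hVopen.mem_nhds hx))
  have hshift : ∀ (g g' : ℝ → ℝ) (d : ℝ), 0 ≤ d → (∀ x ∈ V, HasDerivAt g (g' x) x) →
      ∀ x ∈ V, HasDerivAt (fun y => g (y - d)) (g' (x - d)) x := by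
    intro g g' d hd hg x hx
    have h1 := (hg (x - d) (hsub hd hx)).comp x ((hasDerivAt_id x).sub_const d)
    exact h1.congr_deriv (by simp)
  have hAder : ∀ x ∈ V, HasDerivAt A (Htil x - Htil (x - e)) x := by
    intro x hx
    exact (hJder x hx).sub (hshift J Htil e he.le hJder x hx)
  have hAcont : ContinuousOn A V :=
    fun x hx => (hAder x hx).continuousAt.continuousWithinAt
  have hAeq : ∀ x ∈ V, A x = ∫ u in (x - e)..x, Htil u := by
    intro x hx
    exact integral_interval_sub_left (hInt haV hx) (hInt haV (hsub he.le hx))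
  have hAconst : ∀ x ∈ V, x ≤ a → A x = e := by
    intro x hx hxa
    rw [hAeq x hx]
    have : ∀ u ∈ Set.uIcc (x - e) x, Htil u = 1 := by
      intro u hu
      rw [Set.uIcc_of_le (by linarith : x - e ≤ x)] at hu
      exact hH1 u (hu.2.trans hxa)
    rw [intervalIntegral.integral_congr this, intervalIntegral.integral_const]
    simp
  have hAIntg : ∀ {u v : ℝ}, u ∈ V → v ∈ V → IntervalIntegrable A volume u v :=
    fun hu hv => (hAcont.mono (huIccV hu hv)).intervalIntegrable
  -- second smoothing
  set JA : ℝ → ℝ := fun x => ∫ u in a..x, A u with hJAdef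
  set Ht : ℝ → ℝ := fun x => (JA x - JA (x - e)) * (e * e)⁻¹ + e * (ρ x - ρ a) with hHtdef
  have hJAder : ∀ x ∈ V, HasDerivAt JA (A x) x := by
    intro x hx
    exact integral_hasDerivAt_right (hAIntg haV hx)
      (hAcont.stronglyMeasurableAtFilter hVopen x hx)
      (hAcont.continuousAt (hVopen.mem_nhds hx))
  have hJAeq : ∀ x ∈ V, JA x - JA (x - e) = ∫ u in (x - e)..x, A u := by
    intro x hx
    exact integral_interval_sub_left (hAIntg haV hx) (hAIntg haV (hsub he.le hx))
  set D1 : ℝ → ℝ := fun x => (A x - A (x - e)) * (e * e)⁻¹ + e * ρd x with hD1def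
  set D2 : ℝ → ℝ := fun x =>
    ((Htil x - Htil (x - e)) - (Htil (x - e) - Htil (x - e - e))) * (e * e)⁻¹ + e * ρdd x
    with hD2def
  have hHtder : ∀ x ∈ V, HasDerivAt Ht (D1 x) x := by
    intro x hx
    exact (((hJAder x hx).sub (hshift JA A e he.le hJAder x hx)).mul_const (e * e)⁻¹).add
      (((hρd x hx).sub_const (ρ a)).const_mul e)
  have hD1der : ∀ x ∈ V, HasDerivAt D1 (D2 x) x := by
    intro x hx
    have h1 := hAder x hx
    have h2 := hshift A (fun y => Htil y - Htil (y - e)) e he.le hAder x hx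
    exact ((h1.sub h2).mul_const (e * e)⁻¹).add ((hρdd x hx).const_mul e)
  -- A is monotone on V
  have hAmono : MonotoneOn A V := by
    apply monotoneOn_of_deriv_nonneg hVconv hAcont
    · rw [hVopen.interior_eq]
      exact fun x hx => (hAder x hx).differentiableAt.differentiableWithinAt
    · rw [hVopen.interior_eq]
      intro x hx
      rw [(hAder x hx).deriv]
      have := hHmono (hsub he.le hx) hx (by linarith)
      linarith
  have hD1pos : ∀ x ∈ V, e ≤ D1 x := by
    intro x hx
    have h1 : 0 ≤ A x - A (x - e) := by
      have := hAmono (hsub he.le hx) hx (by linarith)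
      linarith
    have h2 : 0 ≤ (A x - A (x - e)) * (e * e)⁻¹ := by positivity
    have h3 := hρd1 x hx
    show e ≤ (A x - A (x - e)) * (e * e)⁻¹ + e * ρd x
    nlinarith [mul_le_mul_of_nonneg_left h3 he.le]
  have hD2nonneg : ∀ x ∈ V, 0 ≤ D2 x := by
    intro x hx
    have h1 : Htil (x - e) - Htil (x - e - e) ≤ Htil x - Htil (x - e) := by
      have := aux_conv_diff_mono hHconv he.le (by linarith : x - e ≤ x)
        (hsub he.le (hsub he.le hx)) hx
      linarith
    have h2 := hρdd0 x hx
    have h3 : (0:ℝ) ≤ ((Htil x - Htil (x - e)) - (Htil (x - e) - Htil (x - e - e))) * (e * e)⁻¹ :=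
      mul_nonneg (by linarith) (by positivity)
    show (0:ℝ) ≤ ((Htil x - Htil (x - e)) - (Htil (x - e) - Htil (x - e - e))) * (e * e)⁻¹ + e * ρdd x
    nlinarith [mul_le_mul_of_nonneg_left h2 he.le]
  have hD2cont : ContinuousOn D2 V := by
    apply ContinuousOn.add
    · apply ContinuousOn.mul _ continuousOn_const
      have hc : ∀ d : ℝ, 0 ≤ d → ContinuousOn (fun x => Htil (x - d)) V := by
        intro d hd
        apply hHcont.comp (continuous_id.sub continuous_const).continuousOn
        intro x hx
        exact hsub hd hx
      have h0 := hc 0 (le_refl 0)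
      simp only [sub_zero] at h0
      exact (h0.sub (hc e he.le)).sub ((hc e he.le).sub (by
        have := hc (e + e) (by linarith)
        have heq : (fun x => Htil (x - (e + e))) = fun x => Htil (x - e - e) := by
          funext x; ring_nf
        rwa [heq] at this))
    · exact continuousOn_const.mul hρddc
  have hHtcont : ContinuousOn Ht V := fun x hx => (hHtder x hx).continuousAt.continuousWithinAt
  have hHta : Ht a = 1 := by
    have h1 : JA a - JA (a - e) = ∫ u in (a - e)..a, A u := hJAeq a haV
    have h2 : ∀ u ∈ Set.uIcc (a - e) a, A u = e := by
      intro u hu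
      rw [Set.uIcc_of_le (by linarith : a - e ≤ a)] at hu
      exact hAconst u (hVdc hu.2 haV) hu.2
    have h3 : (∫ u in (a - e)..a, A u) = e * e := by
      rw [intervalIntegral.integral_congr h2, intervalIntegral.integral_const, sub_sub_cancel,
        smul_eq_mul]
    show (JA a - JA (a - e)) * (e * e)⁻¹ + e * (ρ a - ρ a) = 1
    rw [h1, h3]
    field_simp
    ring
  have hHtmono : MonotoneOn Ht V := by
    apply monotoneOn_of_deriv_nonneg hVconv hHtcont
    · rw [hVopen.interior_eq]
      exact fun x hx => (hHtder x hx).differentiableAt.differentiableWithinAt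
    · rw [hVopen.interior_eq]
      intro x hx
      rw [(hHtder x hx).deriv]
      linarith [hD1pos x hx]
  have hHtC2 : ContDiffOn ℝ 2 Ht V := by
    have hD1C1 : ContDiffOn ℝ 1 D1 V := by
      rw [show (1 : WithTop ℕ∞) = 0 + 1 by norm_num]
      rw [contDiffOn_succ_iff_deriv_of_isOpen hVopen]
      refine ⟨fun x hx => (hD1der x hx).differentiableAt.differentiableWithinAt, ?_, ?_⟩
      · intro h; simp at h
      · rw [contDiffOn_zero]
        exact hD2cont.congr fun x hx => (hD1der x hx).deriv
    rw [show (2 : WithTop ℕ∞) = 1 + 1 by norm_num]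
    rw [contDiffOn_succ_iff_deriv_of_isOpen hVopen]
    refine ⟨fun x hx => (hHtder x hx).differentiableAt.differentiableWithinAt, ?_, ?_⟩
    · intro h; simp at h
    · exact hD1C1.congr fun x hx => (hHtder x hx).deriv
  have hHtconv : ConvexOn ℝ V Ht := by
    apply convexOn_of_hasDerivWithinAt2_nonneg hVconv hHtcont (f' := D1) (f'' := D2)
    · rw [hVopen.interior_eq]
      exact fun x hx => (hHtder x hx).hasDerivWithinAt
    · rw [hVopen.interior_eq]
      exact fun x hx => (hD1der x hx).hasDerivWithinAt
    · rw [hVopen.interior_eq]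
      exact hD2nonneg
  -- bounds
  have hBub : ∀ x ∈ V, (JA x - JA (x - e)) * (e * e)⁻¹ ≤ Htil x := by
    intro x hx
    have hAub : ∀ u ∈ Set.Icc (x - e) x, A u ≤ e * Htil x := by
      intro u hu
      have huV : u ∈ V := hVdc hu.2 hx
      rw [hAeq u huV]
      have hle : ∀ v ∈ Set.Icc (u - e) u, Htil v ≤ Htil x := by
        intro v hv
        exact hHmono (hVdc (hv.2.trans hu.2) hx) hx (hv.2.trans hu.2)
      calc (∫ v in (u - e)..u, Htil v) ≤ ∫ _ in (u - e)..u, Htil x :=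
            intervalIntegral.integral_mono_on (by linarith) (hInt (hsub he.le huV) huV)
              intervalIntegrable_const hle
        _ = e * Htil x := by rw [intervalIntegral.integral_const, sub_sub_cancel, smul_eq_mul]
    have hB : JA x - JA (x - e) ≤ e * (e * Htil x) := by
      rw [hJAeq x hx]
      calc (∫ u in (x - e)..x, A u) ≤ ∫ _ in (x - e)..x, e * Htil x :=
            intervalIntegral.integral_mono_on (by linarith) (hAIntg (hsub he.le hx) hx)
              intervalIntegrable_const hAub
        _ = e * (e * Htil x) := by
          rw [intervalIntegral.integral_const, sub_sub_cancel, smul_eq_mul]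
    calc (JA x - JA (x - e)) * (e * e)⁻¹ ≤ (e * (e * Htil x)) * (e * e)⁻¹ := by
          apply mul_le_mul_of_nonneg_right hB (by positivity)
      _ = Htil x := by field_simp
  have hBlb : ∀ x ∈ V, Htil (x - e - e) ≤ (JA x - JA (x - e)) * (e * e)⁻¹ := by
    intro x hx
    have hAlb : ∀ u ∈ Set.Icc (x - e) x, e * Htil (x - e - e) ≤ A u := by
      intro u hu
      have huV : u ∈ V := hVdc hu.2 hx
      rw [hAeq u huV]
      have hle : ∀ v ∈ Set.Icc (u - e) u, Htil (x - e - e) ≤ Htil v := by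
        intro v hv
        have hvV : v ∈ V := hVdc (hv.2.trans hu.2) hx
        exact hHmono (hsub he.le (hsub he.le hx)) hvV (by linarith [hv.1, hu.1])
      calc e * Htil (x - e - e) = ∫ _ in (u - e)..u, Htil (x - e - e) := by
            rw [intervalIntegral.integral_const, sub_sub_cancel, smul_eq_mul]
        _ ≤ ∫ v in (u - e)..u, Htil v :=
            intervalIntegral.integral_mono_on (by linarith) intervalIntegrable_const
              (hInt (hsub he.le huV) huV) hle
    have hB : e * (e * Htil (x - e - e)) ≤ JA x - JA (x - e) := by
      rw [hJAeq x hx]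
      calc e * (e * Htil (x - e - e)) = ∫ _ in (x - e)..x, e * Htil (x - e - e) := by
            rw [intervalIntegral.integral_const, sub_sub_cancel, smul_eq_mul]
        _ ≤ ∫ u in (x - e)..x, A u :=
            intervalIntegral.integral_mono_on (by linarith) intervalIntegrable_const
              (hAIntg (hsub he.le hx) hx) hAlb
    calc Htil (x - e - e) = (e * (e * Htil (x - e - e))) * (e * e)⁻¹ := by field_simp
      _ ≤ (JA x - JA (x - e)) * (e * e)⁻¹ := by
          apply mul_le_mul_of_nonneg_right hB (by positivity)
  refine ⟨Ht, hHta, hHtmono, hHtC2, fun x hx => ⟨D1 x, hHtder x hx, hD1pos x hx⟩, hHtconv,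
    ?_, ?_⟩
  · intro x hx
    have := hBlb x hx
    show Htil (x - e - e) ≤ (JA x - JA (x - e)) * (e * e)⁻¹ + e * (ρ x - ρ a) - e * (ρ x - ρ a)
    linarith
  · intro x hx
    have := hBub x hx
    show (JA x - JA (x - e)) * (e * e)⁻¹ + e * (ρ x - ρ a) - e * (ρ x - ρ a) ≤ Htil x
    linarith


end AuxLemmas

set_option maxHeartbeats 1000000 in
theorem stmt16 (lam : ℝ) (hlam : lam ∈ Set.Ioc (0:ℝ) 1)
    (F f : ℝ → ℝ) (a : ℝ) (b : EReal)
    (hF : IsCDF F f a b) (hreg : LambdaRegular lam F f a b) :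
    ∃ G : ℕ → ℝ → ℝ,
      (∀ t : ℕ,
        Monotone (G t) ∧ G t a = 0 ∧
        Tendsto (G t)
          (Filter.comap (fun x : ℝ => (x : EReal)) (nhdsWithin b (Set.Iio b))) (nhds 1) ∧
        ContDiffOn ℝ 2 (G t) {x : ℝ | a < x ∧ (x : EReal) < b} ∧
        (∀ x : ℝ, a < x → (x : EReal) < b → 0 < deriv (G t) x) ∧
        ConvexOn ℝ {x : ℝ | a < x ∧ (x : EReal) < b} (fun x => (1 - G t x) ^ (-lam))) ∧
      (∀ K : Set ℝ, K ⊆ {x : ℝ | a ≤ x ∧ (x : EReal) < b} → IsCompact K →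
        TendstoUniformlyOn (fun t => G t) F Filter.atTop K) := by
  obtain ⟨hlam0, hlam1⟩ := hlam
  obtain ⟨hab, hFmono, hFa, hder, hFlim⟩ := hF
  -- ## basic sets and filters
  have hIooL : ∀ u : ℝ, (u : EReal) < b → {x : ℝ | u < x ∧ (x : EReal) < b} ∈
      Filter.comap (fun x : ℝ => (x : EReal)) (nhdsWithin b (Set.Iio b)) := by
    intro u hu
    refine Filter.mem_of_superset
      (Filter.preimage_mem_comap (Ioo_mem_nhdsLT hu)) ?_
    intro x hx
    exact ⟨EReal.coe_lt_coe_iff.1 hx.1, hx.2⟩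
  have hLne : (Filter.comap (fun x : ℝ => (x : EReal)) (nhdsWithin b (Set.Iio b))).NeBot := by
    apply Filter.comap_neBot
    intro t ht
    have hne : (nhdsWithin b (Set.Iio b)).NeBot :=
      nhdsWithin_Iio_self_neBot' ⟨(a : EReal), hab⟩
    have h3 : t ∩ Set.Ioo (a : EReal) b ∈ nhdsWithin b (Set.Iio b) :=
      Filter.inter_mem ht (Ioo_mem_nhdsLT hab)
    obtain ⟨y, hyt, hy1, hy2⟩ := hne.nonempty_of_mem h3
    have hytop : y ≠ ⊤ := (hy2.trans_le le_top).ne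
    have hybot : y ≠ ⊥ := (lt_trans (EReal.bot_lt_coe a) hy1).ne'
    exact ⟨y.toReal, by rwa [EReal.coe_toReal hytop hybot]⟩
  have hVopen : IsOpen {x : ℝ | (x : EReal) < b} :=
    isOpen_Iio.preimage continuous_coe_real_ereal
  have hVdc : ∀ {x y : ℝ}, y ≤ x → (x : EReal) < b → (y : EReal) < b := by
    intro x y hyx hx
    exact lt_of_le_of_lt (EReal.coe_le_coe_iff.2 hyx) hx
  -- ## F < 1 on [a, b)
  have hFlt1 : ∀ x : ℝ, a ≤ x → (x : EReal) < b → F x < 1 := by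
    intro x hx hxb
    obtain ⟨y, hxy, hyb⟩ := EReal.lt_iff_exists_real_btwn.1 hxb
    have hxy' : x < y := EReal.coe_lt_coe_iff.1 hxy
    have hIccD : ∀ t ∈ Set.Icc x y, a ≤ t ∧ (t : EReal) < b :=
      fun t ht => ⟨hx.trans ht.1, hVdc ht.2 hyb⟩
    have hFxy : F x < F y := by
      have hsm : StrictMonoOn F (Set.Icc x y) := by
        apply strictMonoOn_of_deriv_pos (convex_Icc x y)
        · intro t ht
          obtain ⟨h1, h2⟩ := hIccD t ht
          exact (hder t h1 h2).1.continuousAt.continuousWithinAt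
        · intro t ht
          rw [interior_Icc] at ht
          obtain ⟨h1, h2⟩ := hIccD t (Set.Ioo_subset_Icc_self ht)
          rw [(hder t h1 h2).1.deriv]
          exact (hder t h1 h2).2
      exact hsm (Set.left_mem_Icc.2 hxy'.le) (Set.right_mem_Icc.2 hxy'.le) hxy'
    have hFy1 : F y ≤ 1 := by
      refine ge_of_tendsto hFlim ?_
      filter_upwards [hIooL y hyb] with z hz
      exact hFmono hz.1.le
    linarith
  -- ## convexity and monotonicity of H0 = (1-F)^(-lam) on D
  have h1F : ∀ x : ℝ, a ≤ x → (x : EReal) < b → 0 < 1 - F x := by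
    intro x h1 h2; have := hFlt1 x h1 h2; linarith
  have hH0 : ConvexOn ℝ {x : ℝ | a ≤ x ∧ (x : EReal) < b} (fun x => (1 - F x) ^ (-lam)) ∧
      MonotoneOn (fun x => (1 - F x) ^ (-lam)) {x : ℝ | a ≤ x ∧ (x : EReal) < b} := by
    set D : Set ℝ := {x : ℝ | a ≤ x ∧ (x : EReal) < b} with hDdef
    set H0 : ℝ → ℝ := fun x => (1 - F x) ^ (-lam) with hH0def
    set s : ℝ → ℝ := fun v => (1 - F v) / f v with hsdef
    set h0 : ℝ → ℝ := fun x => -f x * -lam * (1 - F x) ^ (-lam - 1) with hh0def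
    have h1F' : ∀ x ∈ D, 0 < 1 - F x := fun x hx => h1F x hx.1 hx.2
    have hfpos : ∀ x ∈ D, 0 < f x := fun x hx => (hder x hx.1 hx.2).2
    have hspos : ∀ x ∈ D, 0 < s x := fun x hx => div_pos (h1F' x hx) (hfpos x hx)
    have hfeq : ∀ x ∈ D, f x = (1 - F x) / s x := by
      intro x hx
      have h1 := (h1F' x hx).ne'
      have h2 := (hfpos x hx).ne'
      rw [hsdef]
      field_simp
    have hH0der : ∀ x ∈ D, HasDerivAt H0 (h0 x) x := by
      intro x hx
      have h1 : HasDerivAt (fun y => 1 - F y) (-f x) x := (hder x hx.1 hx.2).1.const_sub 1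
      exact h1.rpow_const (Or.inl (h1F' x hx).ne')
    have hh0pos : ∀ x ∈ D, 0 < h0 x := by
      intro x hx
      have h1 := Real.rpow_pos_of_pos (h1F' x hx) (-lam - 1)
      have h2 := hfpos x hx
      rw [hh0def]
      dsimp only
      have he : -f x * -lam * (1 - F x) ^ (-lam - 1)
          = lam * (f x * (1 - F x) ^ (-lam - 1)) := by ring
      rw [he]
      exact mul_pos hlam0 (by positivity)
    have hh0mono : MonotoneOn h0 D := by
      intro x hx y hy hxy
      have hsx := hspos x hx
      have hsy := hspos y hy
      have hsle : ∀ t ∈ Set.Icc x y, s t ≤ s x + lam * (t - x) := by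
        intro t ht
        have htD : t ∈ D := ⟨hx.1.trans ht.1, hVdc ht.2 hy.2⟩
        have := hreg hx htD ht.1
        dsimp only at this
        linarith
      set Φ : ℝ → ℝ := fun t => lam * Real.log (1 - F t) + Real.log (s x + lam * (t - x))
        with hΦdef
      have hdenpos : ∀ t ∈ Set.Icc x y, 0 < s x + lam * (t - x) := by
        intro t ht
        nlinarith [ht.1]
      have hΦder : ∀ t ∈ Set.Icc x y,
          HasDerivAt Φ (lam * (-f t / (1 - F t)) + lam * 1 / (s x + lam * (t - x))) t := by
        intro t ht
        have htD : t ∈ D := ⟨hx.1.trans ht.1, hVdc ht.2 hy.2⟩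
        have h1 : HasDerivAt (fun u => 1 - F u) (-f t) t := (hder t htD.1 htD.2).1.const_sub 1
        have h2 := (h1.log (h1F' t htD).ne').const_mul lam
        have h3 : HasDerivAt (fun u : ℝ => s x + lam * (u - x)) (lam * 1) t :=
          (((hasDerivAt_id t).sub_const x).const_mul lam).const_add (s x)
        have h4 := h3.log (hdenpos t ht).ne'
        exact h2.add h4
      have hΦanti : Φ y ≤ Φ x := by
        rcases eq_or_lt_of_le hxy with h | h
        · subst h; exact le_refl _
        have : AntitoneOn Φ (Set.Icc x y) := by
          apply antitoneOn_of_deriv_nonpos (convex_Icc x y)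
          · intro t ht; exact (hΦder t ht).continuousAt.continuousWithinAt
          · intro t ht
            rw [interior_Icc] at ht
            exact (hΦder t (Set.Ioo_subset_Icc_self ht)).differentiableAt.differentiableWithinAt
          · intro t ht
            rw [interior_Icc] at ht
            have ht' := Set.Ioo_subset_Icc_self ht
            rw [(hΦder t ht').deriv]
            have htD : t ∈ D := ⟨hx.1.trans ht'.1, hVdc ht'.2 hy.2⟩
            have hstpos := hspos t htD
            have hstle := hsle t ht'
            have hd := hdenpos t ht'
            have h1Ft := h1F' t htD
            have hft := hfpos t htD
            have e1 : f t / (1 - F t) = 1 / s t := by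
              rw [hsdef]; field_simp
            have e2 : (1:ℝ) / (s x + lam * (t - x)) ≤ 1 / s t :=
              one_div_le_one_div_of_le hstpos hstle
            have e3 : lam * (-f t / (1 - F t)) = lam * (-(1 / s t)) := by
              rw [← e1]; ring
            have e4 : lam * (-(1 / s t)) + lam * 1 / (s x + lam * (t - x))
                = lam * (1 / (s x + lam * (t - x))) - lam * (1 / s t) := by ring
            rw [e3, e4]
            have e5 := mul_le_mul_of_nonneg_left e2 hlam0.le
            linarith
        exact this (Set.left_mem_Icc.2 hxy) (Set.right_mem_Icc.2 hxy) hxy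
      have hlog : ∀ t (ht : t ∈ D), Real.log (h0 t)
          = Real.log lam + (-lam) * Real.log (1 - F t) - Real.log (s t) := by
        intro t ht
        have h1Ft := h1F' t ht
        have hst := hspos t ht
        have hft := hfpos t ht
        have hrp : (0:ℝ) < (1 - F t) ^ (-lam - 1) := Real.rpow_pos_of_pos h1Ft _
        have he : h0 t = lam * ((1 - F t) ^ (-lam - 1) * f t) := by rw [hh0def]; ring
        rw [he, Real.log_mul hlam0.ne' (by positivity),
          Real.log_mul hrp.ne' hft.ne', Real.log_rpow h1Ft,
          hfeq t ht, Real.log_div h1Ft.ne' hst.ne']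
        ring
      have hgoal : Real.log (h0 x) ≤ Real.log (h0 y) := by
        rw [hlog x hx, hlog y hy]
        have e1 : lam * Real.log (1 - F y) + Real.log (s x + lam * (y - x))
            ≤ lam * Real.log (1 - F x) + Real.log (s x) := by
          have := hΦanti
          rw [hΦdef] at this
          simpa using this
        have e2 : Real.log (s y) ≤ Real.log (s x + lam * (y - x)) := by
          apply (Real.log_le_log_iff hsy (by nlinarith [Set.right_mem_Icc.2 hxy])).2
          exact hsle y (Set.right_mem_Icc.2 hxy)
        linarith
      exact (Real.log_le_log_iff (hh0pos x hx) (hh0pos y hy)).1 hgoal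
    have hDconv : Convex ℝ D := by
      rw [convex_iff_ordConnected]
      exact ⟨fun x hx y hy z hz => ⟨hx.1.trans hz.1, hVdc hz.2 hy.2⟩⟩
    have hH0cont : ContinuousOn H0 D := by
      intro x hx
      have h1 : ContinuousAt (fun y => 1 - F y) x :=
        (continuous_const.sub continuous_id).continuousAt.comp (hder x hx.1 hx.2).1.continuousAt
      exact ((h1.rpow_const (Or.inl (h1F' x hx).ne'))).continuousWithinAt
    have hintD : interior D ⊆ D := interior_subset
    have hH0diff : DifferentiableOn ℝ H0 (interior D) :=
      fun x hx => (hH0der x (hintD hx)).differentiableAt.differentiableWithinAt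
    constructor
    · apply MonotoneOn.convexOn_of_deriv hDconv hH0cont hH0diff
      intro x hx y hy hxy
      rw [(hH0der x (hintD hx)).deriv, (hH0der y (hintD hy)).deriv]
      exact hh0mono (hintD hx) (hintD hy) hxy
    · apply monotoneOn_of_deriv_nonneg hDconv hH0cont hH0diff
      intro x hx
      rw [(hH0der x (hintD hx)).deriv]
      exact (hh0pos x (hintD hx)).le
  -- ## the clamped function Htil
  set Htil : ℝ → ℝ := (fun x => (1 - F x) ^ (-lam)) ∘ (fun x : ℝ => max x a) with hHtildef
  have hclampD : ∀ {x : ℝ}, (x : EReal) < b → a ≤ max x a ∧ ((max x a : ℝ) : EReal) < b := by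
    intro x hx
    constructor
    · exact le_max_right x a
    · rcases le_total x a with h | h
      · rw [max_eq_right h]; exact hab
      · rw [max_eq_left h]; exact hx
  have himg : (fun x : ℝ => max x a) '' {x : ℝ | (x : EReal) < b}
      = {x : ℝ | a ≤ x ∧ (x : EReal) < b} := by
    ext y
    constructor
    · rintro ⟨x, hx, rfl⟩
      exact hclampD hx
    · rintro ⟨h1, h2⟩
      exact ⟨y, h2, max_eq_left h1⟩
  have hVconv : Convex ℝ {x : ℝ | (x : EReal) < b} := by
    rw [convex_iff_ordConnected]
    exact ⟨fun x hx y hy z hz => hVdc hz.2 hy⟩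
  have hclampconv : ConvexOn ℝ {x : ℝ | (x : EReal) < b} (fun x : ℝ => max x a) := by
    refine ⟨hVconv, ?_⟩
    intro x hx y hy p q hp hq hpq
    simp only [smul_eq_mul]
    apply max_le
    · have h1 : x ≤ max x a := le_max_left x a
      have h2 : y ≤ max y a := le_max_left y a
      nlinarith [mul_le_mul_of_nonneg_left h1 hp, mul_le_mul_of_nonneg_left h2 hq]
    · have h1 : a ≤ max x a := le_max_right x a
      have h2 : a ≤ max y a := le_max_right y a
      have h3 : p * a + q * a = a := by rw [← add_mul, hpq, one_mul]
      nlinarith [mul_le_mul_of_nonneg_left h1 hp, mul_le_mul_of_nonneg_left h2 hq]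
  have hHtilconv : ConvexOn ℝ {x : ℝ | (x : EReal) < b} Htil := by
    rw [hHtildef]
    exact ConvexOn.comp (himg ▸ hH0.1) hclampconv (himg ▸ hH0.2)
  have hHtilmono : MonotoneOn Htil {x : ℝ | (x : EReal) < b} := by
    intro x hx y hy hxy
    exact hH0.2 (hclampD hx) (hclampD hy) (max_le_max hxy (le_refl a))
  have hHtilcont : ContinuousOn Htil {x : ℝ | (x : EReal) < b} := by
    have hH0cont : ContinuousOn (fun x => (1 - F x) ^ (-lam))
        {x : ℝ | a ≤ x ∧ (x : EReal) < b} := by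
      intro x hx
      have h1 : ContinuousAt (fun y => 1 - F y) x :=
        (continuous_const.sub continuous_id).continuousAt.comp
          (hder x hx.1 hx.2).1.continuousAt
      exact ((h1.rpow_const (Or.inl (h1F x hx.1 hx.2).ne'))).continuousWithinAt
    exact hH0cont.comp (continuous_id.max continuous_const).continuousOn
      (fun x hx => hclampD hx)
  have hHtil1 : ∀ x ≤ a, Htil x = 1 := by
    intro x hx
    show (1 - F (max x a)) ^ (-lam) = 1
    rw [max_eq_right hx, hFa]
    simp
  have hHtilD : ∀ x : ℝ, a ≤ x → Htil x = (1 - F x) ^ (-lam) := by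
    intro x hx
    show (1 - F (max x a)) ^ (-lam) = (1 - F x) ^ (-lam)
    rw [max_eq_left hx]
  have hHtilge1 : ∀ x : ℝ, (x : EReal) < b → 1 ≤ Htil x := by
    intro x hx
    have h1 : Htil a = 1 := hHtil1 a (le_refl a)
    calc (1:ℝ) = Htil a := h1.symm
      _ ≤ Htil x := by
          rcases le_total x a with h | h
          · rw [hHtil1 x h, h1]
          · exact hHtilmono hab hx h
  have hFrepr : ∀ x : ℝ, a ≤ x → (x : EReal) < b → F x = 1 - (Htil x) ^ (-(1/lam)) := by
    intro x h1 h2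
    rw [hHtilD x h1, ← Real.rpow_mul (h1F x h1 h2).le,
      show -lam * -(1/lam) = 1 by field_simp, Real.rpow_one]
    ring
  -- ## the auxiliary function ρ
  obtain ⟨ρ, ρd, ρdd, hρd, hρdd, hρd1, hρdd0, hρddc, hρtop⟩ :
      ∃ ρ ρd ρdd : ℝ → ℝ,
        (∀ x : ℝ, (x : EReal) < b → HasDerivAt ρ (ρd x) x) ∧
        (∀ x : ℝ, (x : EReal) < b → HasDerivAt ρd (ρdd x) x) ∧
        (∀ x : ℝ, (x : EReal) < b → 1 ≤ ρd x) ∧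
        (∀ x : ℝ, (x : EReal) < b → 0 ≤ ρdd x) ∧
        ContinuousOn ρdd {x : ℝ | (x : EReal) < b} ∧
        Tendsto ρ (Filter.comap (fun x : ℝ => (x : EReal)) (nhdsWithin b (Set.Iio b))) atTop := by
    by_cases hb : b = ⊤
    · refine ⟨id, fun _ => 1, fun _ => 0, fun x _ => hasDerivAt_id x,
        fun x _ => hasDerivAt_const x 1, fun _ _ => le_refl 1, fun _ _ => le_refl 0,
        continuousOn_const, ?_⟩
      rw [tendsto_atTop]
      intro M
      filter_upwards [hIooL M (by rw [hb]; exact EReal.coe_lt_top M)] with x hx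
      exact hx.1.le
    · have hbbot : b ≠ ⊥ := (lt_trans (EReal.bot_lt_coe a) hab).ne'
      set c : ℝ := b.toReal with hc
      have hbc : b = (c : EReal) := (EReal.coe_toReal hb hbbot).symm
      have hcx : ∀ x : ℝ, (x : EReal) < b → x < c := by
        intro x hx; rw [hbc] at hx; exact EReal.coe_lt_coe_iff.1 hx
      refine ⟨fun x => x + (c - x)⁻¹, fun x => 1 + ((c - x) * (c - x))⁻¹,
        fun x => 2 * ((c - x) * (c - x) * (c - x))⁻¹, ?_, ?_, ?_, ?_, ?_, ?_⟩
      · intro x hx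
        have h1 : c - x ≠ 0 := by have := hcx x hx; intro h; linarith [this]
        have h2 : HasDerivAt (fun y : ℝ => c - y) (-1) x := by
          simpa using (hasDerivAt_id x).const_sub c
        have h3 := (h2.inv h1)
        have h4 := (hasDerivAt_id x).add h3
        exact h4.congr_deriv (by ring)
      · intro x hx
        have hpos : 0 < c - x := by have := hcx x hx; linarith
        have h1 : c - x ≠ 0 := hpos.ne'
        have h2 : HasDerivAt (fun y : ℝ => (c - y) * (c - y))
            ((-1) * (c - x) + (c - x) * (-1)) x := by
          have hb2 : HasDerivAt (fun y : ℝ => c - y) (-1) x := by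
            simpa using (hasDerivAt_id x).const_sub c
          exact hb2.mul hb2
        have h3 := (h2.inv (by positivity : (c - x) * (c - x) ≠ 0)).const_add 1
        exact h3.congr_deriv (by field_simp; ring)
      · intro x hx
        have hpos : 0 < c - x := by have := hcx x hx; linarith
        have : 0 < ((c - x) * (c - x))⁻¹ := by positivity
        linarith
      · intro x hx
        have hpos : 0 < c - x := by have := hcx x hx; linarith
        positivity
      · intro x hx
        have hpos : 0 < c - x := by have := hcx x hx; linarith
        have hc1 : ContinuousAt (fun y : ℝ => (c - y) * (c - y) * (c - y)) x := by fun_prop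
        exact (continuousAt_const.mul (hc1.inv₀ (by positivity))).continuousWithinAt
      · rw [tendsto_atTop]
        intro M
        set δ : ℝ := (max (M - a) 1)⁻¹ with hδ
        have hδpos : 0 < δ := by rw [hδ]; positivity
        have hac : a < c := by
          rw [hbc] at hab; exact EReal.coe_lt_coe_iff.1 hab
        set u : ℝ := max a (c - δ) with hu
        have huc : u < c := by rw [hu]; exact max_lt hac (by linarith)
        have hub : (u : EReal) < b := by rw [hbc]; exact EReal.coe_lt_coe_iff.2 huc
        filter_upwards [hIooL u hub] with x hx
        have hxc : x < c := hcx x hx.2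
        have hxu : u < x := hx.1
        have hxa : a < x := lt_of_le_of_lt (le_max_left a (c - δ)) hxu
        have hcx2 : c - x < δ := by
          have : c - δ ≤ u := le_max_right a (c - δ)
          linarith
        have hpos : 0 < c - x := by linarith
        have h5 : δ⁻¹ ≤ (c - x)⁻¹ := inv_anti₀ hpos hcx2.le
        have h6 : M - a ≤ δ⁻¹ := by rw [hδ, inv_inv]; exact le_max_left _ _
        have : M - a ≤ (c - x)⁻¹ := le_trans h6 h5
        linarith
  have hρmono : MonotoneOn ρ {x : ℝ | (x : EReal) < b} := by
    apply monotoneOn_of_deriv_nonneg hVconv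
      (fun x hx => (hρd x hx).continuousAt.continuousWithinAt)
    · rw [hVopen.interior_eq]
      exact fun x hx => (hρd x hx).differentiableAt.differentiableWithinAt
    · rw [hVopen.interior_eq]
      intro x hx
      rw [(hρd x hx).deriv]
      linarith [hρd1 x hx]
  -- ## the smoothed functions
  have hsm : ∀ t : ℕ, ∃ Ht : ℝ → ℝ,
      Ht a = 1 ∧ MonotoneOn Ht {x : ℝ | (x : EReal) < b} ∧
      ContDiffOn ℝ 2 Ht {x : ℝ | (x : EReal) < b} ∧
      (∀ x : ℝ, (x : EReal) < b → ∃ d, HasDerivAt Ht d x ∧ ((t:ℝ)+1)⁻¹ ≤ d) ∧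
      ConvexOn ℝ {x : ℝ | (x : EReal) < b} Ht ∧
      (∀ x : ℝ, (x : EReal) < b →
        Htil (x - ((t:ℝ)+1)⁻¹ - ((t:ℝ)+1)⁻¹) ≤ Ht x - ((t:ℝ)+1)⁻¹ * (ρ x - ρ a)) ∧
      (∀ x : ℝ, (x : EReal) < b → Ht x - ((t:ℝ)+1)⁻¹ * (ρ x - ρ a) ≤ Htil x) := by
    intro t
    exact aux_smooth a b hab Htil ρ ρd ρdd ((t:ℝ)+1)⁻¹ (by positivity)
      hHtilcont hHtilmono hHtilconv hHtil1 hρd hρdd hρd1 hρdd0 hρddc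
  choose Ht hHta hHtmono hHtC2 hHtder hHtconv hHtlb hHtub using hsm
  choose Hd hHd hHdpos using hHtder
  have hHtge1 : ∀ (t : ℕ) (x : ℝ), a ≤ x → (x : EReal) < b → 1 ≤ Ht t x := by
    intro t x h1 h2
    calc (1:ℝ) = Ht t a := (hHta t).symm
      _ ≤ Ht t x := hHtmono t hab h2 h1
  have hexp : -(1/lam) ≤ (0:ℝ) := neg_nonpos.2 (by positivity)
  have hUopen : IsOpen {x : ℝ | a < x ∧ (x : EReal) < b} := by
    have he : {x : ℝ | a < x ∧ (x : EReal) < b} = Set.Ioi a ∩ {x : ℝ | (x : EReal) < b} := rfl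
    rw [he]
    exact isOpen_Ioi.inter hVopen
  have hUconv : Convex ℝ {x : ℝ | a < x ∧ (x : EReal) < b} := by
    rw [convex_iff_ordConnected]
    exact ⟨fun x hx y hy z hz => ⟨lt_of_lt_of_le hx.1 hz.1, hVdc hz.2 hy.2⟩⟩
  set G : ℕ → ℝ → ℝ := fun t x =>
    if (x : EReal) < b then (if x ≤ a then 0 else 1 - (Ht t x) ^ (-(1/lam))) else 1 with hGdef
  have hGeq : ∀ (t : ℕ) (x : ℝ), G t x =
      if (x : EReal) < b then (if x ≤ a then 0 else 1 - (Ht t x) ^ (-(1/lam))) else 1 :=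
    fun t x => rfl
  have hGU : ∀ (t : ℕ), ∀ x ∈ {x : ℝ | a < x ∧ (x : EReal) < b},
      G t x = 1 - (Ht t x) ^ (-(1/lam)) := by
    intro t x hx
    rw [hGeq, if_pos hx.2, if_neg (not_le.2 hx.1)]
  refine ⟨G, fun t => ⟨?_, ?_, ?_, ?_, ?_, ?_⟩, ?_⟩
  · -- monotone
    intro x y hxy
    by_cases hyb : (y : EReal) < b
    · have hxb := hVdc hxy hyb
      rw [hGeq, hGeq, if_pos hxb, if_pos hyb]
      by_cases hya : y ≤ a
      · rw [if_pos (hxy.trans hya), if_pos hya]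
      · push_neg at hya
        rw [if_neg (not_le.2 hya)]
        by_cases hxa : x ≤ a
        · rw [if_pos hxa]
          have h1 : (Ht t y) ^ (-(1/lam)) ≤ 1 :=
            Real.rpow_le_one_of_one_le_of_nonpos (hHtge1 t y hya.le hyb) hexp
          linarith
        · push_neg at hxa
          rw [if_neg (not_le.2 hxa)]
          have h1 : (Ht t y) ^ (-(1/lam)) ≤ (Ht t x) ^ (-(1/lam)) :=
            Real.rpow_le_rpow_of_nonpos (zero_lt_one.trans_le (hHtge1 t x hxa.le hxb))
              (hHtmono t hxb hyb hxy) hexp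
          linarith
    · rw [hGeq, hGeq, if_neg hyb]
      by_cases hxb : (x : EReal) < b
      · rw [if_pos hxb]
        by_cases hxa : x ≤ a
        · rw [if_pos hxa]; exact zero_le_one
        · push_neg at hxa
          rw [if_neg (not_le.2 hxa)]
          have h1 : 0 < (Ht t x) ^ (-(1/lam)) :=
            Real.rpow_pos_of_pos (zero_lt_one.trans_le (hHtge1 t x hxa.le hxb)) _
          linarith
      · rw [if_neg hxb]
  · -- value at a
    rw [hGeq, if_pos hab, if_pos (le_refl a)]
  · -- limit 1 at b
    have hHtop : Tendsto (fun x => Ht t x)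
        (Filter.comap (fun x : ℝ => (x : EReal)) (nhdsWithin b (Set.Iio b))) atTop := by
      have hlow : Tendsto (fun x => ((t:ℝ)+1)⁻¹ * ρ x + (1 - ((t:ℝ)+1)⁻¹ * ρ a))
          (Filter.comap (fun x : ℝ => (x : EReal)) (nhdsWithin b (Set.Iio b))) atTop :=
        tendsto_atTop_add_const_right _ _ (hρtop.const_mul_atTop (by positivity))
      apply tendsto_atTop_mono' _ ?_ hlow
      filter_upwards [hIooL a hab] with x hx
      have h1 := hHtlb t x hx.2
      have hss : x - ((t:ℝ)+1)⁻¹ - ((t:ℝ)+1)⁻¹ ≤ x := by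
        have h0 : (0:ℝ) ≤ ((t:ℝ)+1)⁻¹ := by positivity
        linarith
      have h2 : (1:ℝ) ≤ Htil (x - ((t:ℝ)+1)⁻¹ - ((t:ℝ)+1)⁻¹) :=
        hHtilge1 _ (hVdc hss hx.2)
      show ((t:ℝ)+1)⁻¹ * ρ x + (1 - ((t:ℝ)+1)⁻¹ * ρ a) ≤ Ht t x
      nlinarith [h1, h2]
    have h0 : Tendsto (fun x => (Ht t x) ^ (-(1/lam)))
        (Filter.comap (fun x : ℝ => (x : EReal)) (nhdsWithin b (Set.Iio b))) (nhds 0) :=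
      (tendsto_rpow_neg_atTop (by positivity : (0:ℝ) < 1/lam)).comp hHtop
    have h1 : Tendsto (fun x => 1 - (Ht t x) ^ (-(1/lam)))
        (Filter.comap (fun x : ℝ => (x : EReal)) (nhdsWithin b (Set.Iio b))) (nhds 1) := by
      simpa using tendsto_const_nhds.sub h0
    apply h1.congr'
    filter_upwards [hIooL a hab] with x hx
    exact (hGU t x hx).symm
  · -- C^2
    refine ContDiffOn.congr ?_ (hGU t)
    refine contDiffOn_const.sub ?_
    refine ((hHtC2 t).mono (fun x hx => hx.2)).rpow_const_of_ne ?_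
    intro x hx
    have := hHtge1 t x hx.1.le hx.2
    positivity
  · -- positive derivative
    intro x hx1 hx2
    have hU : x ∈ {x : ℝ | a < x ∧ (x : EReal) < b} := ⟨hx1, hx2⟩
    have heq : deriv (G t) x = deriv (fun y => 1 - (Ht t y) ^ (-(1/lam))) x := by
      apply Filter.EventuallyEq.deriv_eq
      exact Filter.eventuallyEq_of_mem (hUopen.mem_nhds hU) (hGU t)
    have hne : Ht t x ≠ 0 := by
      have := hHtge1 t x hx1.le hx2; positivity
    have hD := (hHd t x hx2).rpow_const (p := -(1/lam)) (Or.inl hne)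
    have hG := hD.const_sub 1
    rw [heq, hG.deriv]
    have h1 : 0 < Hd t x hx2 := lt_of_lt_of_le (by positivity) (hHdpos t x hx2)
    have h2 : 0 < Ht t x ^ (-(1/lam) - 1) :=
      Real.rpow_pos_of_pos (zero_lt_one.trans_le (hHtge1 t x hx1.le hx2)) _
    have h3 : -(Hd t x hx2 * -(1/lam) * Ht t x ^ (-(1/lam) - 1))
        = Hd t x hx2 * (1/lam) * Ht t x ^ (-(1/lam) - 1) := by ring
    rw [h3]
    exact mul_pos (mul_pos h1 (by positivity)) h2
  · -- convexity of (1 - G)^(-lam)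
    have hkey : ∀ x ∈ {x : ℝ | a < x ∧ (x : EReal) < b}, (1 - G t x) ^ (-lam) = Ht t x := by
      intro x hx
      have hpos : 0 < Ht t x := zero_lt_one.trans_le (hHtge1 t x hx.1.le hx.2)
      rw [hGU t x hx, show (1 - (1 - Ht t x ^ (-(1/lam)))) = Ht t x ^ (-(1/lam)) by ring,
        ← Real.rpow_mul hpos.le, show -(1/lam) * -lam = 1 by field_simp, Real.rpow_one]
    have hconvU : ConvexOn ℝ {x : ℝ | a < x ∧ (x : EReal) < b} (Ht t) :=
      (hHtconv t).subset (fun x hx => hx.2) hUconv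
    constructor
    · exact hUconv
    intro x hx y hy p q hp hq hpq
    have hmem := hUconv hx hy hp hq hpq
    have h1 := hconvU.2 hx hy hp hq hpq
    simp only [smul_eq_mul] at h1 hmem ⊢
    rw [hkey x hx, hkey y hy, hkey _ hmem]
    exact h1
  · -- uniform convergence on compacts
    intro K hKD hKcomp
    rcases K.eq_empty_or_nonempty with rfl | hKne
    · exact tendstoUniformlyOn_empty
    have hMK : sSup K ∈ K := hKcomp.sSup_mem hKne
    have hMD := hKD hMK
    have hxleM : ∀ x ∈ K, x ≤ sSup K := fun x hx => le_csSup hKcomp.bddAbove hx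
    have hIccV : Set.Icc (a-2) (sSup K) ⊆ {x : ℝ | (x : EReal) < b} :=
      fun y hy => hVdc hy.2 hMD.2
    have hunif := isCompact_Icc.uniformContinuousOn_of_continuous (hHtilcont.mono hIccV)
    rw [Metric.uniformContinuousOn_iff] at hunif
    have hC0 : 0 ≤ ρ (sSup K) - ρ a := sub_nonneg.2 (hρmono hab hMD.2 hMD.1)
    rw [Metric.tendstoUniformlyOn_iff]
    intro ε hε
    obtain ⟨δ, hδpos, hδ⟩ := hunif (lam*ε/2) (by positivity)
    obtain ⟨N, hN⟩ := exists_nat_gt (max (2/δ) ((ρ (sSup K) - ρ a)*2/(lam*ε)))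
    filter_upwards [eventually_ge_atTop N] with t hNt
    intro x hxK
    have hxD := hKD hxK
    have hp : (0:ℝ) < (t:ℝ)+1 := by positivity
    have hte : max (2/δ) ((ρ (sSup K) - ρ a)*2/(lam*ε)) < (t:ℝ)+1 := by
      have h1 : (N:ℝ) ≤ (t:ℝ) := by exact_mod_cast hNt
      linarith [hN]
    have h2e : 2 * ((t:ℝ)+1)⁻¹ < δ := by
      have h1 : 2/δ < (t:ℝ)+1 := lt_of_le_of_lt (le_max_left _ _) hte
      have h2 : 2 < ((t:ℝ)+1)*δ := (div_lt_iff₀ hδpos).1 h1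
      calc 2 * ((t:ℝ)+1)⁻¹ = 2/((t:ℝ)+1) := by rw [div_eq_mul_inv]
        _ < δ := by rw [div_lt_iff₀ hp]; nlinarith
    have heC : ((t:ℝ)+1)⁻¹ * (ρ (sSup K) - ρ a) < lam*ε/2 := by
      have h1 : (ρ (sSup K) - ρ a)*2/(lam*ε) < (t:ℝ)+1 := lt_of_le_of_lt (le_max_right _ _) hte
      have hlε : (0:ℝ) < lam*ε := by positivity
      have h2 : (ρ (sSup K) - ρ a)*2 < ((t:ℝ)+1)*(lam*ε) := (div_lt_iff₀ hlε).1 h1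
      calc ((t:ℝ)+1)⁻¹ * (ρ (sSup K) - ρ a) = (ρ (sSup K) - ρ a)/((t:ℝ)+1) := by
            rw [mul_comm, div_eq_mul_inv]
        _ < lam*ε/2 := by rw [div_lt_iff₀ hp]; nlinarith
    have he1 : ((t:ℝ)+1)⁻¹ ≤ 1 := by
      rw [show (1:ℝ) = (1:ℝ)⁻¹ by norm_num]
      exact inv_anti₀ one_pos (by linarith)
    have hepos : (0:ℝ) < ((t:ℝ)+1)⁻¹ := by positivity
    by_cases hxa : x ≤ a
    · have hxa' : x = a := le_antisymm hxa hxD.1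
      rw [hGeq, if_pos hxD.2, if_pos hxa, hxa', hFa]
      simpa [Real.dist_eq] using hε
    · push_neg at hxa
      rw [Real.dist_eq, hGeq, if_pos hxD.2, if_neg (not_le.2 hxa),
        hFrepr x hxD.1 hxD.2]
      have hlip := aux_rpow_lip (c := 1/lam) (by positivity)
        (hHtilge1 x hxD.2) (hHtge1 t x hxD.1 hxD.2)
      have hdiffb : |Htil x - Ht t x| ≤
          (Htil x - Htil (x - ((t:ℝ)+1)⁻¹ - ((t:ℝ)+1)⁻¹))
          + ((t:ℝ)+1)⁻¹ * (ρ x - ρ a) := by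
        have hu := hHtub t x hxD.2
        have hl := hHtlb t x hxD.2
        have hρx0 : 0 ≤ ρ x - ρ a := sub_nonneg.2 (hρmono hab hxD.2 hxD.1)
        have hmod0 : 0 ≤ Htil x - Htil (x - ((t:ℝ)+1)⁻¹ - ((t:ℝ)+1)⁻¹) :=
          sub_nonneg.2 (hHtilmono (hVdc (by linarith) hxD.2) hxD.2 (by linarith))
        rw [abs_le]
        have hmn : 0 ≤ ((t:ℝ)+1)⁻¹ * (ρ x - ρ a) := mul_nonneg hepos.le hρx0
        constructor
        · linarith
        · linarith
      have hmodlt : Htil x - Htil (x - ((t:ℝ)+1)⁻¹ - ((t:ℝ)+1)⁻¹) < lam*ε/2 := by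
        have hx1 : x ∈ Set.Icc (a-2) (sSup K) := ⟨by linarith [hxD.1], hxleM x hxK⟩
        have hx2 : x - ((t:ℝ)+1)⁻¹ - ((t:ℝ)+1)⁻¹ ∈ Set.Icc (a-2) (sSup K) := by
          constructor
          · linarith [hxD.1]
          · linarith [hxleM x hxK]
        have hdd : dist x (x - ((t:ℝ)+1)⁻¹ - ((t:ℝ)+1)⁻¹) < δ := by
          rw [Real.dist_eq, abs_of_nonneg (by linarith)]
          linarith
        have := hδ x hx1 _ hx2 hdd
        rw [Real.dist_eq] at this
        calc Htil x - Htil (x - ((t:ℝ)+1)⁻¹ - ((t:ℝ)+1)⁻¹)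
            ≤ |Htil x - Htil (x - ((t:ℝ)+1)⁻¹ - ((t:ℝ)+1)⁻¹)| := le_abs_self _
          _ < lam*ε/2 := this
      have hρbd : ((t:ℝ)+1)⁻¹ * (ρ x - ρ a) ≤ ((t:ℝ)+1)⁻¹ * (ρ (sSup K) - ρ a) := by
        apply mul_le_mul_of_nonneg_left _ hepos.le
        have := hρmono hxD.2 hMD.2 (hxleM x hxK)
        linarith
      calc |1 - Htil x ^ (-(1/lam)) - (1 - Ht t x ^ (-(1/lam)))|
          = |Htil x ^ (-(1/lam)) - Ht t x ^ (-(1/lam))| := by rw [show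
              (1 - Htil x ^ (-(1/lam)) - (1 - Ht t x ^ (-(1/lam))))
              = -(Htil x ^ (-(1/lam)) - Ht t x ^ (-(1/lam))) by ring, abs_neg]
        _ ≤ (1/lam) * |Htil x - Ht t x| := hlip
        _ < (1/lam) * (lam * ε) := by
            apply mul_lt_mul_of_pos_left _ (by positivity : (0:ℝ) < 1/lam)
            calc |Htil x - Ht t x| ≤ _ := hdiffb
              _ < lam*ε := by linarith
        _ = ε := by field_simp
end

section
/- Let n > e⁴ be an integer and let μ be the probability measure on [1, n) with density f(x) = (n/(n−1))·x^{−2}, so its CDF is F(x) = (n/(n−1))·(1 − 1/x) for x ∈ [1, n). Then: (i) x·(1 − F(x)) ≤ 1 for every x ∈ [1, n), with equality at x = 1 (so the optimal single-item posted-price revenue is 1); and (ii) if X_1, …, X_n are i.i.d. draws from μ, then P[X_1 + ⋯ + X_n ≥ n²·ln(n)/(2(n−1))] ≥ 3/4. Consequently, the bundle price n²·ln(n)/(2(n−1)) yields expected revenue at least (3/8)·n·ln(n), which is at least (3/8)·ln(n) times the revenue n obtainable from selling n items by optimal item pricing. -/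
open MeasureTheory ProbabilityTheory Function Set intervalIntegral
open scoped NNReal ENNReal

section helpers

lemma my_mp_eval {ι : Type*} [Fintype ι] {α : ι → Type*}
    [∀ i, MeasurableSpace (α i)] (μ : ∀ i, Measure (α i)) [∀ i, IsProbabilityMeasure (μ i)]
    (i : ι) : MeasurePreserving (Function.eval i) (Measure.pi μ) (μ i) := by
  classical
  refine ⟨measurable_pi_apply i, ?_⟩
  ext s hs
  rw [Measure.map_apply (measurable_pi_apply i) hs, Set.eval_preimage, Measure.pi_pi,
    Fintype.prod_eq_single i (fun j hj => by rw [Function.update_of_ne hj]; simp)]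
  simp

lemma my_iIndep {ι : Type*} [Fintype ι] {α : ι → Type*} [∀ i, MeasurableSpace (α i)]
    (μ : ∀ i, Measure (α i)) [∀ i, IsProbabilityMeasure (μ i)] :
    iIndepFun (fun i (v : ∀ i, α i) => v i) (Measure.pi μ) := by
  classical
  rw [iIndepFun_iff_measure_inter_preimage_eq_mul]
  intro S sets hsets
  have h1 : (⋂ i ∈ S, (fun v : ∀ i, α i => v i) ⁻¹' sets i)
      = Set.pi univ (fun i => if i ∈ S then sets i else univ) := by
    ext v
    simp only [Set.mem_iInter, Set.mem_preimage, Set.mem_pi, Set.mem_univ, true_implies]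
    constructor
    · intro h i; split <;> simp_all
    · intro h i hi; have := h i; simp_all
  rw [h1, Measure.pi_pi]
  have h2 : ∀ i, μ i (if i ∈ S then sets i else univ)
      = if i ∈ S then Measure.pi μ ((fun v : ∀ i, α i => v i) ⁻¹' sets i) else 1 := by
    intro i
    split_ifs with h
    · exact ((my_mp_eval μ i).measure_preimage (hsets i h).nullMeasurableSet).symm
    · simp
  simp_rw [h2]
  rw [Finset.prod_ite_mem Finset.univ S, Finset.univ_inter]

lemma myu {b : ℝ} (hb : 1 < b) : (0:ℝ) ∉ Set.uIcc (1:ℝ) b := by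
  rw [Set.uIcc_of_le hb.le]; intro h; simp at h; linarith [h.1]

lemma myint0 {b : ℝ} (hb : 1 < b) : ∫ x in Ico (1:ℝ) b, x⁻¹^2 = 1 - b⁻¹ := by
  rw [integral_Ico_eq_integral_Ioo, ← integral_Ioc_eq_integral_Ioo,
    ← intervalIntegral.integral_of_le hb.le]
  have : ∀ x ∈ Set.uIcc (1:ℝ) b, x⁻¹^2 = x ^ (-2 : ℤ) := by
    intro x hx; rw [zpow_neg, inv_pow]; norm_num
  rw [intervalIntegral.integral_congr this,
    integral_zpow (Or.inr ⟨by norm_num, myu hb⟩)]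
  norm_num; ring

lemma myint1 {b : ℝ} (hb : 1 < b) : ∫ x in Ico (1:ℝ) b, x * x⁻¹^2 = Real.log b := by
  rw [integral_Ico_eq_integral_Ioo, ← integral_Ioc_eq_integral_Ioo,
    ← intervalIntegral.integral_of_le hb.le]
  have : ∀ x ∈ Set.uIcc (1:ℝ) b, x * x⁻¹^2 = x⁻¹ := by
    intro x hx
    have hx0 : x ≠ 0 := fun h => (myu hb) (h ▸ hx)
    field_simp
  rw [intervalIntegral.integral_congr this, integral_inv (myu hb)]
  simp

lemma myint2 {b : ℝ} (hb : 1 < b) : ∫ x in Ico (1:ℝ) b, x^2 * x⁻¹^2 = b - 1 := by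
  rw [integral_Ico_eq_integral_Ioo, ← integral_Ioc_eq_integral_Ioo,
    ← intervalIntegral.integral_of_le hb.le]
  have : ∀ x ∈ Set.uIcc (1:ℝ) b, x^2 * x⁻¹^2 = 1 := by
    intro x hx
    have hx0 : x ≠ 0 := fun h => (myu hb) (h ▸ hx)
    field_simp
  rw [intervalIntegral.integral_congr this]
  simp

lemma mydens_meas (c : ℝ) : Measurable fun x : ℝ => (c * x⁻¹^2).toNNReal :=
  measurable_real_toNNReal.comp (measurable_const.mul (measurable_inv.pow_const 2))

lemma mytransfer {b c : ℝ} (hc : 0 ≤ c) (g : ℝ → ℝ) :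
    ∫ x, g x ∂((volume.restrict (Ico (1:ℝ) b)).withDensity
      (fun x => ENNReal.ofReal (c * x⁻¹^2)))
      = ∫ x in Ico (1:ℝ) b, (c * x⁻¹^2) * g x := by
  have h1 : (fun x : ℝ => ENNReal.ofReal (c * x⁻¹^2))
      = fun x : ℝ => ((c * x⁻¹^2).toNNReal : ℝ≥0∞) := rfl
  rw [h1, integral_withDensity_eq_integral_smul (mydens_meas c)]
  refine integral_congr_ae (Filter.Eventually.of_forall fun x => ?_)
  have : ((c * x⁻¹^2).toNNReal : ℝ) = c * x⁻¹^2 :=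
    Real.coe_toNNReal _ (mul_nonneg hc (sq_nonneg _))
  simp only [NNReal.smul_def, this, smul_eq_mul]

lemma myintegOn {b c : ℝ} (hb : 1 < b) (hc : 0 ≤ c) {g : ℝ → ℝ} (hg : Measurable g)
    (hbd : ∀ x ∈ Ico (1:ℝ) b, |g x| ≤ b^2) :
    IntegrableOn (fun x => g x * (c * x⁻¹^2)) (Ico (1:ℝ) b) := by
  have hfin : volume (Ico (1:ℝ) b) < ⊤ := by simp [Real.volume_Ico]
  refine Integrable.mono' (g := fun _ => b^2 * c) (integrableOn_const hfin.ne)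
    (hg.aestronglyMeasurable.mul
      ((measurable_const.mul (measurable_inv.pow_const 2)).aestronglyMeasurable)) ?_
  rw [ae_restrict_iff' measurableSet_Ico]
  refine Filter.Eventually.of_forall fun x hx => ?_
  have hx1 : 1 ≤ x := hx.1
  have hx0 : 0 < x := by linarith
  rw [Real.norm_eq_abs, abs_mul]
  have h3 : |c * x⁻¹^2| = c * x⁻¹^2 := abs_of_nonneg (mul_nonneg hc (sq_nonneg _))
  have h4 : x⁻¹^2 ≤ 1 := by
    rw [inv_pow]
    exact inv_le_one_of_one_le₀ (by nlinarith)
  calc |g x| * |c * x⁻¹^2| ≤ b^2 * (c * 1) := by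
        rw [h3]
        refine mul_le_mul (hbd x hx) ?_ (mul_nonneg hc (sq_nonneg _)) (by positivity)
        exact mul_le_mul_of_nonneg_left h4 hc
    _ = b^2 * c := by ring

lemma myinteg {b c : ℝ} (hb : 1 < b) (hc : 0 ≤ c) {g : ℝ → ℝ} (hg : Measurable g)
    (hbd : ∀ x ∈ Ico (1:ℝ) b, |g x| ≤ b^2) :
    Integrable g ((volume.restrict (Ico (1:ℝ) b)).withDensity
      (fun x => ENNReal.ofReal (c * x⁻¹^2))) := by
  rw [integrable_withDensity_iff (by fun_prop)
    (Filter.Eventually.of_forall fun x => ENNReal.ofReal_lt_top)]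
  have heq : (fun x => g x * (ENNReal.ofReal (c * x⁻¹^2)).toReal)
      = fun x => g x * (c * x⁻¹^2) := by
    ext x; rw [ENNReal.toReal_ofReal (mul_nonneg hc (sq_nonneg _))]
  rw [heq]
  exact myintegOn hb hc hg hbd

lemma myarith3 {B : ℝ} (hB : 1 < B) :
    B * (B / (B - 1) * Real.log B) = 2 * (B ^ 2 * Real.log B / (2 * (B - 1))) := by
  have h : B - 1 ≠ 0 := by linarith
  field_simp

lemma myarith5 {B : ℝ} (hB : 1 < B) :
    (B ^ 2 * Real.log B / (2 * (B - 1))) * (3 / 4)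
      = 3 / 8 * Real.log B * (B ^ 2 / (B - 1)) := by
  have h : B - 1 ≠ 0 := by linarith
  field_simp
  ring

lemma myar_h2b {B : ℝ} (hB : 5 < B) (hL : 4 < Real.log B) :
    2 * B ≤ B ^ 2 * Real.log B / (2 * (B - 1)) := by
  rw [le_div_iff₀ (by linarith)]
  nlinarith

lemma myar_hq {V B T : ℝ} (hV0 : 0 ≤ V) (hV : V ≤ B ^ 2) (hT : 2 * B ≤ T) (hB : 0 < B) :
    V / T ^ 2 ≤ 1 / 4 := by
  have hT0 : 0 < T := by linarith
  rw [div_le_iff₀ (by positivity)]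
  nlinarith

lemma myar_key {B : ℝ} (hB : 5 < B) (hL : 4 < Real.log B) :
    3 / 8 * B * Real.log B ≤ (B ^ 2 * Real.log B / (2 * (B - 1))) * (3 / 4) := by
  have e : (B ^ 2 * Real.log B / (2 * (B - 1))) * (3 / 4)
      = 3 / 8 * Real.log B * (B ^ 2 / (B - 1)) := myarith5 (by linarith)
  have e2 : B ≤ B ^ 2 / (B - 1) := by
    rw [le_div_iff₀ (by linarith)]; nlinarith
  calc 3 / 8 * B * Real.log B = 3 / 8 * Real.log B * B := by ring
    _ ≤ 3 / 8 * Real.log B * (B ^ 2 / (B - 1)) :=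
        mul_le_mul_of_nonneg_left e2 (by nlinarith)
    _ = _ := e.symm

end helpers

theorem stmt17 (n : ℕ) (hn : Real.exp 4 < n)
    (μ : Measure ℝ)
    (hμ : μ = (volume.restrict (Set.Ico (1:ℝ) (n:ℝ))).withDensity
        (fun x => ENNReal.ofReal (((n : ℝ) / ((n : ℝ) - 1)) * x⁻¹ ^ 2)))
    (F : ℝ → ℝ) (hF : ∀ x, F x = ((n : ℝ) / ((n : ℝ) - 1)) * (1 - 1 / x)) :
    (∀ x ∈ Set.Ico (1:ℝ) (n:ℝ), x * (1 - F x) ≤ 1) ∧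
    (1 * (1 - F 1) = 1) ∧
    (ENNReal.ofReal (3 / 4) ≤
      (Measure.pi fun _ : Fin n => μ)
        {v : Fin n → ℝ | (n : ℝ) ^ 2 * Real.log n / (2 * ((n : ℝ) - 1)) ≤ ∑ i, v i}) ∧
    ((n : ℝ) ^ 2 * Real.log n / (2 * ((n : ℝ) - 1)) *
        ((Measure.pi fun _ : Fin n => μ)
          {v : Fin n → ℝ |
            (n : ℝ) ^ 2 * Real.log n / (2 * ((n : ℝ) - 1)) ≤ ∑ i, v i}).toReal ≥
      3 / 8 * (n : ℝ) * Real.log n ∧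
      3 / 8 * (n : ℝ) * Real.log n = (3 / 8 * Real.log n) * (n : ℝ)) := by
  have hb5 : (5:ℝ) < (n:ℝ) := by
    have := Real.add_one_le_exp (4:ℝ)
    linarith
  have hb1 : (1:ℝ) < (n:ℝ) := by linarith
  have hlog : (4:ℝ) < Real.log n := (Real.lt_log_iff_exp_lt (by linarith)).2 hn
  set b : ℝ := (n:ℝ) with hbdef
  set c : ℝ := (n:ℝ) / ((n:ℝ) - 1) with hcdef
  have hc1 : 1 < c := (one_lt_div (by linarith)).2 (by linarith)
  have hc0 : (0:ℝ) ≤ c := by linarith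
  have hb10 : b - 1 ≠ 0 := by linarith
  have hb10' : (0:ℝ) < b - 1 := by linarith
  -- probability measure
  have hμprob : IsProbabilityMeasure μ := by
    constructor
    rw [hμ, withDensity_apply _ MeasurableSet.univ, Measure.restrict_univ]
    have hint : IntegrableOn (fun x : ℝ => c * x⁻¹^2) (Ico (1:ℝ) b) := by
      have := myintegOn (g := fun _ : ℝ => (1:ℝ)) hb1 hc0 measurable_const
        (fun x hx => by rw [abs_one]; nlinarith)
      simpa using this
    rw [← ofReal_integral_eq_lintegral_ofReal hint
      (Filter.Eventually.of_forall fun x => mul_nonneg hc0 (sq_nonneg _))]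
    have : ∫ x in Ico (1:ℝ) b, c * x⁻¹^2 = c * (1 - b⁻¹) := by
      rw [MeasureTheory.integral_const_mul, myint0 hb1]
    rw [this]
    have : c * (1 - b⁻¹) = 1 := by
      have h1 : (1 : ℝ) - b⁻¹ = (b - 1) / b := by field_simp
      rw [hcdef, ← hbdef, h1, div_mul_div_comm, mul_comm]
      exact div_self (ne_of_gt (by nlinarith))
    rw [this, ENNReal.ofReal_one]
  refine ⟨?_, ?_, ?_⟩
  -- part (i)
  · intro x hx
    rw [hF x]
    have hx1 : 1 ≤ x := hx.1
    have hx0 : x ≠ 0 := by positivity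
    have key : x * (1 - c * (1 - 1/x)) = x * (1 - c) + c := by
      field_simp; ring
    rw [key]
    nlinarith
  -- part (ii)
  · rw [hF 1]; norm_num
  -- parts (iii) and (iv)
  set P := Measure.pi (fun _ : Fin n => μ) with hPdef
  haveI : IsProbabilityMeasure P := by rw [hPdef]; infer_instance
  set X : Fin n → (Fin n → ℝ) → ℝ := fun i v => v i with hXdef
  have hXmp : ∀ i, MeasurePreserving (X i) P μ := fun i => my_mp_eval _ i
  -- Memℒp of identity under μ
  have hidmem : MemLp (id : ℝ → ℝ) 2 μ := by
    rw [memLp_two_iff_integrable_sq aestronglyMeasurable_id, hμ]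
    exact myinteg hb1 hc0 (measurable_id.pow_const 2)
      (fun x hx => by
        simp only [id_eq]
        rw [abs_of_nonneg (sq_nonneg x)]
        have h1 : (0:ℝ) ≤ x := by linarith [hx.1]
        nlinarith [hx.2])
  have hXmem : ∀ i, MemLp (X i) 2 P := fun i =>
    hidmem.comp_measurePreserving (hXmp i)
  have hXint : ∀ i, Integrable (X i) P := fun i => (hXmem i).integrable one_le_two
  -- integrals of id and id^2 under μ
  have hm : ∫ x, x ∂μ = c * Real.log b := by
    rw [hμ, mytransfer hc0]
    have : ∀ x : ℝ, (c * x⁻¹^2) * x = c * (x * x⁻¹^2) := fun x => by ring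
    simp_rw [this]
    rw [MeasureTheory.integral_const_mul, myint1 hb1]
  have hsq : ∫ x, x^2 ∂μ = b := by
    rw [hμ, mytransfer hc0]
    have : ∀ x : ℝ, (c * x⁻¹^2) * x^2 = c * (x^2 * x⁻¹^2) := fun x => by ring
    simp_rw [this]
    rw [MeasureTheory.integral_const_mul, myint2 hb1]
    rw [hcdef, ← hbdef]
    exact div_mul_cancel₀ _ hb10
  -- expectations of coordinates
  have hEXi : ∀ i, ∫ v : Fin n → ℝ, v i ∂P = c * Real.log b := by
    intro i
    rw [← hm, ← (hXmp i).map_eq]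
    exact (integral_map (φ := X i) (f := fun x : ℝ => x) ((measurable_pi_apply i).aemeasurable)
      measurable_id'.aestronglyMeasurable).symm
  have hEXi2 : ∀ i, ∫ v : Fin n → ℝ, (v i)^2 ∂P = b := by
    intro i
    rw [← hsq, ← (hXmp i).map_eq]
    exact (integral_map (φ := X i) (f := fun x : ℝ => x ^ 2) ((measurable_pi_apply i).aemeasurable)
      ((measurable_id'.pow_const 2).aestronglyMeasurable)).symm
  -- variance of each coordinate
  have hvar : ∀ i, variance (X i) P ≤ b := by
    intro i
    rw [variance_eq_sub (hXmem i)]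
    have h1 : (∫ v, (X i ^ 2) v ∂P) = b := by
      rw [show (∫ v, (X i ^ 2) v ∂P) = ∫ v : Fin n → ℝ, (v i)^2 ∂P from rfl]
      exact hEXi2 i
    rw [h1]
    nlinarith [sq_nonneg (∫ v, X i v ∂P)]
  -- sum
  have hSapp : ∀ v : Fin n → ℝ, (∑ i, X i) v = ∑ i, v i := by
    intro v; rw [Finset.sum_apply]
  have hSmem : MemLp (∑ i, X i) 2 P := memLp_finset_sum' _ (fun i _ => hXmem i)
  have hES : ∫ v, (∑ i, X i) v ∂P = b * (c * Real.log b) := by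
    simp_rw [hSapp]
    rw [integral_finset_sum (f := fun (i : Fin n) (v : Fin n → ℝ) => v i) _
      (fun i _ => hXint i)]
    simp_rw [hEXi]
    rw [Finset.sum_const, Finset.card_univ, Fintype.card_fin, nsmul_eq_mul, hbdef]
  have hVarS : variance (∑ i, X i) P ≤ b^2 := by
    have hind := my_iIndep (fun _ : Fin n => μ)
    have := IndepFun.variance_sum (μ := P) (X := X) (s := Finset.univ)
      (fun i _ => hXmem i)
      (fun i _ j _ hij => hind.indepFun hij)
    rw [this]
    calc ∑ i : Fin n, variance (X i) P ≤ ∑ _i : Fin n, b :=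
          Finset.sum_le_sum (fun i _ => hvar i)
      _ = b * b := by
          rw [Finset.sum_const, Finset.card_univ, Fintype.card_fin, nsmul_eq_mul, hbdef]
      _ = b^2 := by ring
  -- threshold
  set t : ℝ := b^2 * Real.log b / (2 * (b - 1)) with htdef
  have ht0 : 0 < t := by
    apply div_pos
    · nlinarith
    · linarith
  have hESt : ∫ v, (∑ i, X i) v ∂P = 2 * t := by
    rw [hES, hcdef, ← hbdef, htdef]
    exact myarith3 hb1
  have h2b : 2 * b ≤ t := by
    rw [htdef]
    exact myar_h2b hb5 hlog
  -- Chebyshev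
  have cheb := meas_ge_le_variance_div_sq (μ := P) hSmem ht0
  have hq : variance (∑ i, X i) P / t^2 ≤ 1/4 :=
    myar_hq (variance_nonneg _ _) hVarS h2b (by linarith)
  have hPB : P {ω | t ≤ |(∑ i, X i) ω - ∫ v, (∑ i, X i) v ∂P|} ≤ ENNReal.ofReal (1/4) :=
    cheb.trans (ENNReal.ofReal_le_ofReal hq)
  have hSmeas : Measurable (∑ i : Fin n, X i) := by
    have h := Finset.measurable_sum (f := X) Finset.univ (fun i _ => measurable_pi_apply i)
    have e : (∑ i : Fin n, X i) = fun v => ∑ i, v i := funext hSapp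
    rw [e]
    exact h
  have hBmeas : MeasurableSet {ω : Fin n → ℝ | t ≤ |(∑ i, X i) ω - ∫ v, (∑ i, X i) v ∂P|} :=
    measurableSet_le measurable_const ((hSmeas.sub_const _).abs)
  have hsub : {ω : Fin n → ℝ | t ≤ |(∑ i, X i) ω - ∫ v, (∑ i, X i) v ∂P|}ᶜ ⊆
      {v : Fin n → ℝ | (n : ℝ) ^ 2 * Real.log n / (2 * ((n : ℝ) - 1)) ≤ ∑ i, v i} := by
    intro v hv
    simp only [Set.mem_compl_iff, Set.mem_setOf_eq, not_le] at hv
    rw [hESt] at hv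
    have := abs_lt.1 hv
    simp only [Set.mem_setOf_eq]
    have h1 : t ≤ (∑ i, X i) v := by linarith [this.1]
    rw [hSapp] at h1
    exact h1
  have hmain : ENNReal.ofReal (3/4) ≤
      P {v : Fin n → ℝ | (n : ℝ) ^ 2 * Real.log n / (2 * ((n : ℝ) - 1)) ≤ ∑ i, v i} := by
    calc ENNReal.ofReal (3/4) = 1 - ENNReal.ofReal (1/4) := by
          rw [← ENNReal.ofReal_one, ← ENNReal.ofReal_sub _ (by norm_num)]
          norm_num
      _ ≤ 1 - P {ω | t ≤ |(∑ i, X i) ω - ∫ v, (∑ i, X i) v ∂P|} :=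
          tsub_le_tsub_left hPB 1
      _ = P {ω | t ≤ |(∑ i, X i) ω - ∫ v, (∑ i, X i) v ∂P|}ᶜ := by
          rw [measure_compl hBmeas (measure_ne_top P _), measure_univ]
      _ ≤ _ := measure_mono hsub
  refine ⟨hmain, ?_, by ring⟩
  -- part (iv)
  have hfin : P {v : Fin n → ℝ | (n : ℝ) ^ 2 * Real.log n / (2 * ((n : ℝ) - 1)) ≤ ∑ i, v i} ≠ ⊤ :=
    measure_ne_top P _
  have h34 : (3:ℝ)/4 ≤
      (P {v : Fin n → ℝ | (n : ℝ) ^ 2 * Real.log n / (2 * ((n : ℝ) - 1)) ≤ ∑ i, v i}).toReal := by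
    have := ENNReal.toReal_mono hfin hmain
    rwa [ENNReal.toReal_ofReal (by norm_num)] at this
  have key : 3/8 * b * Real.log b ≤ t * (3/4) := by
    rw [htdef]
    exact myar_key hb5 hlog
  rw [ge_iff_le]
  calc 3/8 * (n:ℝ) * Real.log n ≤ t * (3/4) := key
    _ ≤ t * (P {v : Fin n → ℝ | (n : ℝ) ^ 2 * Real.log n / (2 * ((n : ℝ) - 1)) ≤ ∑ i, v i}).toReal :=
        mul_le_mul_of_nonneg_left h34 ht0.le
end
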